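/- arXiv:1508.01396 — 6 statements merged into one kernel-verified Lean document; each statement's English description precedes it below -/
import Mathlib

section
/- If a graph G has exactly one coloring of size χ(G), then that coloring is a Kempe-coloring, i.e., the union of any two distinct color classes induces a connected subgraph of G. -/
open SimpleGraph

/-- `A` is an anticlique (independent set) of `G`. -/
def IsAnticlique {V : Type*} (G : SimpleGraph V) (A : Finset V) : Prop :=
  ∀ x ∈ A, ∀ y ∈ A, ¬ G.Adj x y

/-- A coloring of `G`: a partition of the vertex set into nonempty anticliques. -/
def IsColoring {V : Type*} (G : SimpleGraph V) (c : Finset (Finset V)) : Prop :=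
  (∀ A ∈ c, A.Nonempty) ∧
  (∀ A ∈ c, ∀ B ∈ c, A ≠ B → Disjoint A B) ∧
  (∀ v : V, ∃ A ∈ c, v ∈ A) ∧
  (∀ A ∈ c, IsAnticlique G A)

/-- `A` induces a connected subgraph of `G`. -/
def ConnSet {V : Type*} (G : SimpleGraph V) (A : Finset V) : Prop :=
  (G.induce (↑A : Set V)).Connected

/-- A Kempe-coloring: any two distinct classes induce a connected subgraph. -/
def IsKempe {V : Type*} [DecidableEq V] (G : SimpleGraph V) (c : Finset (Finset V)) : Prop :=
  IsColoring G c ∧ ∀ A ∈ c, ∀ B ∈ c, A ≠ B → ConnSet G (A ∪ B)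

/-- Two vertex sets are adjacent if some edge joins them. -/
def SetsAdj {V : Type*} (G : SimpleGraph V) (A B : Finset V) : Prop :=
  ∃ a ∈ A, ∃ b ∈ B, G.Adj a b

/-- A clique minor: pairwise disjoint, pairwise adjacent, nonempty connected subsets. -/
def IsCliqueMinor {V : Type*} (G : SimpleGraph V) (K : Finset (Finset V)) : Prop :=
  (∀ A ∈ K, A.Nonempty) ∧ (∀ A ∈ K, ConnSet G A) ∧
  (∀ A ∈ K, ∀ B ∈ K, A ≠ B → Disjoint A B ∧ SetsAdj G A B)

/-- A shallow clique minor: a clique minor all of whose branch sets have size 1 or 2. -/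
def IsShallowCliqueMinor {V : Type*} (G : SimpleGraph V) (K : Finset (Finset V)) : Prop :=
  IsCliqueMinor G K ∧ ∀ A ∈ K, A.card ≤ 2

/-- `T` is a transversal of the family `K`: it meets each member in exactly one vertex. -/
def Traversed {V : Type*} [DecidableEq V] (T : Finset V) (K : Finset (Finset V)) : Prop :=
  ∀ A ∈ K, (T ∩ A).card = 1

/-- `c` is a coloring of `G` of minimum size, i.e. of size `χ(G)`. -/
def MinColoring {V : Type*} (G : SimpleGraph V) (c : Finset (Finset V)) : Prop :=
  IsColoring G c ∧ ∀ d, IsColoring G d → c.card ≤ d.card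

/-- `G` has no antitriangle (independent set of size 3). -/
def HasNoAntitriangle {V : Type*} (G : SimpleGraph V) : Prop :=
  ¬ ∃ A : Finset V, A.card = 3 ∧ IsAnticlique G A

/-- a unique minimum coloring is a Kempe-coloring. -/
theorem unique_min_coloring_is_kempe {V : Type*} [Fintype V] [DecidableEq V]
    (G : SimpleGraph V) (c : Finset (Finset V))
    (hmin : MinColoring G c)
    (huniq : ∀ d, IsColoring G d → d.card = c.card → d = c) :
    IsKempe G c := by
  classical
  obtain ⟨hc, hminle⟩ := hmin
  obtain ⟨hne, hdisj, hcov, hanti⟩ := hc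
  refine ⟨⟨hne, hdisj, hcov, hanti⟩, ?_⟩
  intro A hA B hB hAB
  by_contra hconn
  set U : Finset V := A ∪ B with hU
  have hUnonempty : Nonempty (↑(↑U : Set V)) := by
    obtain ⟨a, ha⟩ := hne A hA
    exact ⟨⟨a, by simp [hU, ha]⟩⟩
  have hnp : ¬ (G.induce (↑U : Set V)).Preconnected := by
    intro hp
    refine hconn ?_
    show (G.induce (↑U : Set V)).Connected
    rw [SimpleGraph.connected_iff]
    exact ⟨hp, hUnonempty⟩
  rw [SimpleGraph.Preconnected] at hnp
  push_neg at hnp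
  obtain ⟨u, v, huv⟩ := hnp
  set S : Finset V := U.filter
    (fun x => ∃ h : x ∈ (↑U : Set V), (G.induce (↑U : Set V)).Reachable u ⟨x, h⟩) with hS
  have hSsub : S ⊆ U := Finset.filter_subset _ _
  have huU : (u : V) ∈ U := by simpa using u.2
  have huS : (u : V) ∈ S := by
    refine Finset.mem_filter.2 ⟨huU, u.2, ?_⟩
    exact SimpleGraph.Reachable.refl _
  have hvU : (v : V) ∈ U := by simpa using v.2
  have hvS : (v : V) ∉ S := by
    intro hv
    obtain ⟨-, h, hreach⟩ := Finset.mem_filter.1 hv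
    exact huv hreach
  have hcross : ∀ x ∈ S, ∀ y ∈ U, y ∉ S → ¬ G.Adj x y := by
    intro x hx y hy hyS hadj
    obtain ⟨hxU, hxm, hreach⟩ := Finset.mem_filter.1 hx
    have hym : y ∈ (↑U : Set V) := by simpa using hy
    have hadj' : (G.induce (↑U : Set V)).Adj ⟨x, hxm⟩ ⟨y, hym⟩ := hadj
    exact hyS (Finset.mem_filter.2 ⟨hy, hym, hreach.trans hadj'.reachable⟩)
  have hAB' : Disjoint A B := hdisj A hA B hB hAB
  set A' : Finset V := A ∩ S ∪ B \ S with hA'def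
  set B' : Finset V := B ∩ S ∪ A \ S with hB'def
  have hA'sub : A' ⊆ U := by
    intro x hx
    rcases Finset.mem_union.1 hx with h | h
    · exact Finset.mem_union_left _ (Finset.mem_inter.1 h).1
    · exact Finset.mem_union_right _ (Finset.mem_sdiff.1 h).1
  have hB'sub : B' ⊆ U := by
    intro x hx
    rcases Finset.mem_union.1 hx with h | h
    · exact Finset.mem_union_right _ (Finset.mem_inter.1 h).1
    · exact Finset.mem_union_left _ (Finset.mem_sdiff.1 h).1
  have hBneA : B ∈ c → A ∈ c → True := fun _ _ => trivial
  by_cases hdeg : A'.Nonempty ∧ B'.Nonempty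
  · -- main case: swap across S to get a different coloring of the same size
    obtain ⟨hA'ne, hB'ne⟩ := hdeg
    have hantiA' : IsAnticlique G A' := by
      intro x hx y hy hadj
      rcases Finset.mem_union.1 hx with hx | hx <;> rcases Finset.mem_union.1 hy with hy | hy
      · exact hanti A hA x (Finset.mem_inter.1 hx).1 y (Finset.mem_inter.1 hy).1 hadj
      · obtain ⟨hyB, hyS⟩ := Finset.mem_sdiff.1 hy
        exact hcross x (Finset.mem_inter.1 hx).2 y (Finset.mem_union_right _ hyB) hyS hadj
      · obtain ⟨hxB, hxS⟩ := Finset.mem_sdiff.1 hx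
        exact hcross y (Finset.mem_inter.1 hy).2 x (Finset.mem_union_right _ hxB) hxS hadj.symm
      · exact hanti B hB x (Finset.mem_sdiff.1 hx).1 y (Finset.mem_sdiff.1 hy).1 hadj
    have hantiB' : IsAnticlique G B' := by
      intro x hx y hy hadj
      rcases Finset.mem_union.1 hx with hx | hx <;> rcases Finset.mem_union.1 hy with hy | hy
      · exact hanti B hB x (Finset.mem_inter.1 hx).1 y (Finset.mem_inter.1 hy).1 hadj
      · obtain ⟨hyA, hyS⟩ := Finset.mem_sdiff.1 hy
        exact hcross x (Finset.mem_inter.1 hx).2 y (Finset.mem_union_left _ hyA) hyS hadj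
      · obtain ⟨hxA, hxS⟩ := Finset.mem_sdiff.1 hx
        exact hcross y (Finset.mem_inter.1 hy).2 x (Finset.mem_union_left _ hxA) hxS hadj.symm
      · exact hanti A hA x (Finset.mem_sdiff.1 hx).1 y (Finset.mem_sdiff.1 hy).1 hadj
    have hdisjA'B' : Disjoint A' B' := by
      rw [Finset.disjoint_left]
      intro x hx hx'
      rcases Finset.mem_union.1 hx with hx | hx <;> rcases Finset.mem_union.1 hx' with hx' | hx'
      · exact Finset.disjoint_left.1 hAB' (Finset.mem_inter.1 hx).1 (Finset.mem_inter.1 hx').1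
      · exact (Finset.mem_sdiff.1 hx').2 (Finset.mem_inter.1 hx).2
      · exact (Finset.mem_sdiff.1 hx).2 (Finset.mem_inter.1 hx').2
      · exact Finset.disjoint_left.1 hAB' (Finset.mem_sdiff.1 hx').1 (Finset.mem_sdiff.1 hx).1
    have hA'neB' : A' ≠ B' := by
      intro h
      obtain ⟨a, ha⟩ := hA'ne
      exact Finset.disjoint_left.1 hdisjA'B' ha (h ▸ ha)
    have hA'neA : A' ≠ A := by
      intro h
      have hUS : ∀ x ∈ U, x ∈ S := by
        intro x hx
        rcases Finset.mem_union.1 hx with hx | hx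
        · have : x ∈ A' := h ▸ hx
          rcases Finset.mem_union.1 this with h' | h'
          · exact (Finset.mem_inter.1 h').2
          · exact absurd (Finset.mem_sdiff.1 h').1 (Finset.disjoint_left.1 hAB' hx)
        · by_contra hxS
          have : x ∈ A' := Finset.mem_union_right _ (Finset.mem_sdiff.2 ⟨hx, hxS⟩)
          rw [h] at this
          exact Finset.disjoint_right.1 hAB' hx this
      exact hvS (hUS _ hvU)
    have hA'neB : A' ≠ B := by
      intro h
      have hUS : ∀ x ∈ U, x ∉ S := by
        intro x hx
        rcases Finset.mem_union.1 hx with hx | hx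
        · intro hxS
          have : x ∈ A' := Finset.mem_union_left _ (Finset.mem_inter.2 ⟨hx, hxS⟩)
          rw [h] at this
          exact Finset.disjoint_left.1 hAB' hx this
        · intro hxS
          have : x ∈ A' := h ▸ hx
          rcases Finset.mem_union.1 this with h' | h'
          · exact Finset.disjoint_right.1 hAB' hx (Finset.mem_inter.1 h').1
          · exact (Finset.mem_sdiff.1 h').2 hxS
      exact hUS _ huU huS
    have hB'neB : B' ≠ B := by
      intro h
      have hUS : ∀ x ∈ U, x ∈ S := by
        intro x hx
        rcases Finset.mem_union.1 hx with hx | hx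
        · by_contra hxS
          have : x ∈ B' := Finset.mem_union_right _ (Finset.mem_sdiff.2 ⟨hx, hxS⟩)
          rw [h] at this
          exact Finset.disjoint_left.1 hAB' hx this
        · have : x ∈ B' := h ▸ hx
          rcases Finset.mem_union.1 this with h' | h'
          · exact (Finset.mem_inter.1 h').2
          · exact absurd (Finset.mem_sdiff.1 h').1 (Finset.disjoint_right.1 hAB' hx)
      exact hvS (hUS _ hvU)
    have hB'neA : B' ≠ A := by
      intro h
      have hUS : ∀ x ∈ U, x ∉ S := by
        intro x hx
        rcases Finset.mem_union.1 hx with hx | hx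
        · intro hxS
          have : x ∈ B' := h ▸ hx
          rcases Finset.mem_union.1 this with h' | h'
          · exact Finset.disjoint_left.1 hAB' hx (Finset.mem_inter.1 h').1
          · exact (Finset.mem_sdiff.1 h').2 hxS
        · intro hxS
          have : x ∈ B' := Finset.mem_union_left _ (Finset.mem_inter.2 ⟨hx, hxS⟩)
          rw [h] at this
          exact Finset.disjoint_right.1 hAB' hx this
      exact hUS _ huU huS
    -- a nonempty subset of U distinct from A and B cannot be a class of c
    have hnotc : ∀ W : Finset V, W ⊆ U → W.Nonempty → W ≠ A → W ≠ B → W ∉ c := by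
      intro W hWU ⟨w, hw⟩ hWA hWB hWc
      rcases Finset.mem_union.1 (hWU hw) with h | h
      · exact Finset.disjoint_left.1 (hdisj W hWc A hA hWA) hw h
      · exact Finset.disjoint_left.1 (hdisj W hWc B hB hWB) hw h
    have hA'notc : A' ∉ c := hnotc A' hA'sub hA'ne hA'neA hA'neB
    have hB'notc : B' ∉ c := hnotc B' hB'sub hB'ne hB'neA hB'neB
    -- build the swapped coloring
    set d : Finset (Finset V) := insert A' (insert B' (c \ {A, B})) with hd
    have hmemd : ∀ C ∈ d, C = A' ∨ C = B' ∨ (C ∈ c ∧ C ≠ A ∧ C ≠ B) := by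
      intro C hC
      rcases Finset.mem_insert.1 hC with h | h
      · exact Or.inl h
      rcases Finset.mem_insert.1 h with h | h
      · exact Or.inr (Or.inl h)
      obtain ⟨h1, h2⟩ := Finset.mem_sdiff.1 h
      simp only [Finset.mem_insert, Finset.mem_singleton] at h2
      push_neg at h2
      exact Or.inr (Or.inr ⟨h1, h2⟩)
    have hdisjA'C : ∀ C ∈ c, C ≠ A → C ≠ B → Disjoint A' C := by
      intro C hC h1 h2
      refine Finset.disjoint_left.2 fun x hx hxC => ?_
      rcases Finset.mem_union.1 (hA'sub hx) with h | h
      · exact Finset.disjoint_left.1 (hdisj C hC A hA h1) hxC h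
      · exact Finset.disjoint_left.1 (hdisj C hC B hB h2) hxC h
    have hdisjB'C : ∀ C ∈ c, C ≠ A → C ≠ B → Disjoint B' C := by
      intro C hC h1 h2
      refine Finset.disjoint_left.2 fun x hx hxC => ?_
      rcases Finset.mem_union.1 (hB'sub hx) with h | h
      · exact Finset.disjoint_left.1 (hdisj C hC A hA h1) hxC h
      · exact Finset.disjoint_left.1 (hdisj C hC B hB h2) hxC h
    have hdcol : IsColoring G d := by
      refine ⟨?_, ?_, ?_, ?_⟩
      · intro C hC
        rcases hmemd C hC with h | h | ⟨h, -⟩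
        · exact h ▸ hA'ne
        · exact h ▸ hB'ne
        · exact hne C h
      · intro C hC D hD hCD
        rcases hmemd C hC with h1 | h1 | ⟨h1, h1A, h1B⟩ <;>
          rcases hmemd D hD with h2 | h2 | ⟨h2, h2A, h2B⟩
        · exact absurd (h1.trans h2.symm) hCD
        · rw [h1, h2]; exact hdisjA'B'
        · rw [h1]; exact hdisjA'C D h2 h2A h2B
        · rw [h1, h2]; exact hdisjA'B'.symm
        · exact absurd (h1.trans h2.symm) hCD
        · rw [h1]; exact hdisjB'C D h2 h2A h2B
        · rw [h2]; exact (hdisjA'C C h1 h1A h1B).symm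
        · rw [h2]; exact (hdisjB'C C h1 h1A h1B).symm
        · exact hdisj C h1 D h2 hCD
      · intro x
        obtain ⟨C, hC, hxC⟩ := hcov x
        by_cases h1 : C = A
        · subst h1
          by_cases hxS : x ∈ S
          · exact ⟨A', Finset.mem_insert_self _ _,
              Finset.mem_union_left _ (Finset.mem_inter.2 ⟨hxC, hxS⟩)⟩
          · exact ⟨B', Finset.mem_insert.2 (Or.inr (Finset.mem_insert_self _ _)),
              Finset.mem_union_right _ (Finset.mem_sdiff.2 ⟨hxC, hxS⟩)⟩
        by_cases h2 : C = B
        · subst h2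
          by_cases hxS : x ∈ S
          · exact ⟨B', Finset.mem_insert.2 (Or.inr (Finset.mem_insert_self _ _)),
              Finset.mem_union_left _ (Finset.mem_inter.2 ⟨hxC, hxS⟩)⟩
          · exact ⟨A', Finset.mem_insert_self _ _,
              Finset.mem_union_right _ (Finset.mem_sdiff.2 ⟨hxC, hxS⟩)⟩
        · refine ⟨C, ?_, hxC⟩
          refine Finset.mem_insert.2 (Or.inr (Finset.mem_insert.2 (Or.inr ?_)))
          exact Finset.mem_sdiff.2 ⟨hC, by simp [h1, h2]⟩
      · intro C hC
        rcases hmemd C hC with h | h | ⟨h, -⟩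
        · exact h ▸ hantiA'
        · exact h ▸ hantiB'
        · exact hanti C h
    have hABsub : {A, B} ⊆ c := by
      intro x hx
      rcases Finset.mem_insert.1 hx with h | h
      · exact h ▸ hA
      · exact (Finset.mem_singleton.1 h) ▸ hB
    have hcardAB : ({A, B} : Finset (Finset V)).card = 2 := Finset.card_pair hAB
    have hc2 : 2 ≤ c.card := hcardAB ▸ Finset.card_le_card hABsub
    have hcard : d.card = c.card := by
      have hB'notin : B' ∉ c \ {A, B} := fun h => hB'notc (Finset.mem_sdiff.1 h).1
      have hA'notin : A' ∉ insert B' (c \ {A, B}) := by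
        intro h
        rcases Finset.mem_insert.1 h with h | h
        · exact hA'neB' h
        · exact hA'notc (Finset.mem_sdiff.1 h).1
      rw [hd, Finset.card_insert_of_notMem hA'notin,
        Finset.card_insert_of_notMem hB'notin,
        Finset.card_sdiff_of_subset hABsub, hcardAB]
      omega
    have := huniq d hdcol hcard
    exact hA'notc (this ▸ Finset.mem_insert_self A' (insert B' (c \ {A, B})))
  · -- degenerate case: one side of the cut misses A or B entirely; merge A and B
    have hnoedge : ∀ a ∈ A, ∀ b ∈ B, ¬ G.Adj a b := by
      rw [not_and_or] at hdeg
      rcases hdeg with h | h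
      · rw [Finset.not_nonempty_iff_eq_empty] at h
        -- A ∩ S = ∅ and B \ S = ∅ : A avoids S, B ⊆ S
        intro a ha b hb hadj
        have haS : a ∉ S := fun haS => by
          have : a ∈ A' := Finset.mem_union_left _ (Finset.mem_inter.2 ⟨ha, haS⟩)
          simp [h] at this
        have hbS : b ∈ S := by
          by_contra hbS
          have : b ∈ A' := Finset.mem_union_right _ (Finset.mem_sdiff.2 ⟨hb, hbS⟩)
          simp [h] at this
        exact hcross b hbS a (Finset.mem_union_left _ ha) haS hadj.symm
      · rw [Finset.not_nonempty_iff_eq_empty] at h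
        intro a ha b hb hadj
        have hbS : b ∉ S := fun hbS => by
          have : b ∈ B' := Finset.mem_union_left _ (Finset.mem_inter.2 ⟨hb, hbS⟩)
          simp [h] at this
        have haS : a ∈ S := by
          by_contra haS
          have : a ∈ B' := Finset.mem_union_right _ (Finset.mem_sdiff.2 ⟨ha, haS⟩)
          simp [h] at this
        exact hcross a haS b (Finset.mem_union_right _ hb) hbS hadj
    set d : Finset (Finset V) := insert U (c \ {A, B}) with hd
    have hmemd : ∀ C ∈ d, C = U ∨ (C ∈ c ∧ C ≠ A ∧ C ≠ B) := by
      intro C hC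
      rcases Finset.mem_insert.1 hC with h | h
      · exact Or.inl h
      obtain ⟨h1, h2⟩ := Finset.mem_sdiff.1 h
      simp only [Finset.mem_insert, Finset.mem_singleton] at h2
      push_neg at h2
      exact Or.inr ⟨h1, h2⟩
    have hantiU : IsAnticlique G U := by
      intro x hx y hy hadj
      rcases Finset.mem_union.1 hx with hx | hx <;> rcases Finset.mem_union.1 hy with hy | hy
      · exact hanti A hA x hx y hy hadj
      · exact hnoedge x hx y hy hadj
      · exact hnoedge y hy x hx hadj.symm
      · exact hanti B hB x hx y hy hadj
    have hdisjUC : ∀ C ∈ c, C ≠ A → C ≠ B → Disjoint U C := by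
      intro C hC h1 h2
      refine Finset.disjoint_left.2 fun x hx hxC => ?_
      rcases Finset.mem_union.1 hx with h | h
      · exact Finset.disjoint_left.1 (hdisj C hC A hA h1) hxC h
      · exact Finset.disjoint_left.1 (hdisj C hC B hB h2) hxC h
    have hdcol : IsColoring G d := by
      refine ⟨?_, ?_, ?_, ?_⟩
      · intro C hC
        rcases hmemd C hC with h | ⟨h, -⟩
        · obtain ⟨a, ha⟩ := hne A hA
          exact h ▸ ⟨a, Finset.mem_union_left _ ha⟩
        · exact hne C h
      · intro C hC D hD hCD
        rcases hmemd C hC with h1 | ⟨h1, h1A, h1B⟩ <;>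
          rcases hmemd D hD with h2 | ⟨h2, h2A, h2B⟩
        · exact absurd (h1.trans h2.symm) hCD
        · rw [h1]; exact hdisjUC D h2 h2A h2B
        · rw [h2]; exact (hdisjUC C h1 h1A h1B).symm
        · exact hdisj C h1 D h2 hCD
      · intro x
        obtain ⟨C, hC, hxC⟩ := hcov x
        by_cases h1 : C = A
        · exact ⟨U, Finset.mem_insert_self _ _, Finset.mem_union_left _ (h1 ▸ hxC)⟩
        by_cases h2 : C = B
        · exact ⟨U, Finset.mem_insert_self _ _, Finset.mem_union_right _ (h2 ▸ hxC)⟩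
        · exact ⟨C, Finset.mem_insert.2 (Or.inr (Finset.mem_sdiff.2 ⟨hC, by simp [h1, h2]⟩)), hxC⟩
      · intro C hC
        rcases hmemd C hC with h | ⟨h, -⟩
        · exact h ▸ hantiU
        · exact hanti C h
    have hABsub : {A, B} ⊆ c := by
      intro x hx
      rcases Finset.mem_insert.1 hx with h | h
      · exact h ▸ hA
      · exact (Finset.mem_singleton.1 h) ▸ hB
    have hcardAB : ({A, B} : Finset (Finset V)).card = 2 := Finset.card_pair hAB
    have hc2 : 2 ≤ c.card := hcardAB ▸ Finset.card_le_card hABsub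
    have hUnotc : U ∉ c \ {A, B} := by
      intro h
      obtain ⟨h1, h2⟩ := Finset.mem_sdiff.1 h
      simp only [Finset.mem_insert, Finset.mem_singleton] at h2
      push_neg at h2
      obtain ⟨a, ha⟩ := hne A hA
      exact Finset.disjoint_left.1 (hdisj U h1 A hA h2.1) (Finset.mem_union_left _ ha) ha
    have hcard : d.card = c.card - 1 := by
      rw [hd, Finset.card_insert_of_notMem hUnotc, Finset.card_sdiff_of_subset hABsub, hcardAB]
      omega
    have := hminle d hdcol
    omega
end

section
/- Suppose G has no antitriangles and exactly one coloring 𝔠 of size χ(G). Then for every transversal T of 𝔠 there exists a shallow clique minor of G of size χ(G) traversed by T. -/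
open SimpleGraph

/-!
Without antitriangles every colour class `A` has at most two vertices: its root `tv A`, the vertex
of `A` in `T`, and `tb A`, the other vertex of `A` (equal to `tv A` if `A` is a singleton).
Uniqueness of the minimum colouring rules out every recolouring that does not increase the number
of classes: moving one vertex into another class, exchanging vertices between two classes, and
rotating vertices along a cycle of classes. Hence every vertex sees every other class, singleton
roots see everything, two pair classes with nonadjacent roots have adjacent second vertices, and
the relation "`tb A` is not adjacent to `tv B`" has no cycles on the pair classes, so every set of
pair classes has a sink. Matching pair classes with nonadjacent roots greedily along such sinks,
the class `A` matched to `B` gets the branch set `{tv A, tb B}` and an unmatched class `{tv A}`.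
-/

section Colorings

variable {V : Type*} {G : SimpleGraph V} {c : Finset (Finset V)}

lemma IsAnticlique.mono {A B : Finset V} (hB : IsAnticlique G B) (hAB : A ⊆ B) :
    IsAnticlique G A :=
  fun x hx y hy => hB x (hAB hx) y (hAB hy)

lemma IsAnticlique.insert [DecidableEq V] {A : Finset V} {v : V} (hA : IsAnticlique G A)
    (hv : ∀ a ∈ A, ¬ G.Adj v a) : IsAnticlique G (insert v A) := by
  intro x hx y hy
  rcases Finset.mem_insert.mp hx with rfl | hx <;> rcases Finset.mem_insert.mp hy with hy | hy
  · exact hy ▸ G.irrefl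
  · exact hv y hy
  · exact hy ▸ fun h => hv x hx h.symm
  · exact hA x hx y hy

lemma connSet_insert_of_forall_adj [DecidableEq V] {s : Finset V} {a : V} (h : ∀ b ∈ s, G.Adj a b) :
    ConnSet G (insert a s) := by
  rw [ConnSet, connected_iff_exists_forall_reachable]
  refine ⟨⟨a, by simp⟩, fun ⟨b, hb⟩ => ?_⟩
  rcases Finset.mem_insert.mp hb with rfl | hb
  · rfl
  · exact Adj.reachable (by simpa using h b hb)

lemma mem_of_eq_pair [DecidableEq V] {A : Finset V} {a b : V} (hA : A = {a, b}) :
    a ∈ A ∧ b ∈ A := by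
  simp [hA]

lemma SetsAdj.symm {A B : Finset V} (h : SetsAdj G A B) : SetsAdj G B A :=
  let ⟨a, ha, b, hb, hab⟩ := h
  ⟨b, hb, a, ha, hab.symm⟩

lemma IsColoring.eq_of_mem (hc : IsColoring G c) {A B : Finset V} (hA : A ∈ c) (hB : B ∈ c)
    {v : V} (hvA : v ∈ A) (hvB : v ∈ B) : A = B := by
  by_contra hAB
  exact Finset.disjoint_left.mp (hc.2.1 A hA B hB hAB) hvA hvB

lemma IsColoring.card_le_two (hc : IsColoring G c) (hat : HasNoAntitriangle G)
    {A : Finset V} (hA : A ∈ c) : A.card ≤ 2 := by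
  by_contra! h
  obtain ⟨S, hSA, hS⟩ := Finset.exists_subset_card_eq (show 3 ≤ A.card by omega)
  exact hat ⟨S, hS, (hc.2.2.2 A hA).mono hSA⟩

lemma IsColoring.exists_roots [DecidableEq V] [Nonempty V] (hc : IsColoring G c)
    (hat : HasNoAntitriangle G) {T : Finset V} (hT : Traversed T c) :
    ∃ tv tb : Finset V → V, ∀ A ∈ c, T ∩ A = {tv A} ∧ A = {tv A, tb A} := by
  have h : ∀ A ∈ c, ∃ t b, T ∩ A = {t} ∧ A = {t, b} := by
    intro A hA
    obtain ⟨t, ht⟩ := Finset.card_eq_one.mp (hT A hA)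
    have htA : t ∈ A := Finset.mem_of_mem_inter_right (ht ▸ Finset.mem_singleton_self t)
    have hle : (A.erase t).card ≤ 1 := by
      have := hc.card_le_two hat hA
      rw [Finset.card_erase_of_mem htA]
      omega
    obtain ⟨b, hb⟩ := Finset.card_le_one_iff_subset_singleton.mp hle
    rcases Finset.subset_singleton_iff.mp hb with h | h
    · exact ⟨t, t, ht, by rw [← Finset.insert_erase htA, h]; simp⟩
    · exact ⟨t, b, ht, by rw [← Finset.insert_erase htA, h]⟩
  choose! tv tb h using h
  exact ⟨tv, tb, h⟩

lemma IsColoring.sdiff_union [DecidableEq V] (hc : IsColoring G c) {D N : Finset (Finset V)}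
    (hD : D ⊆ c)
    (hN : ∀ B ∈ N, B.Nonempty ∧ IsAnticlique G B)
    (hNdisj : ∀ B ∈ N, ∀ B' ∈ N, B ≠ B' → Disjoint B B')
    (hcover : ∀ v, (∃ A ∈ D, v ∈ A) ↔ ∃ B ∈ N, v ∈ B) :
    IsColoring G (c \ D ∪ N) := by
  have hold_new : ∀ A ∈ c \ D, ∀ B ∈ N, Disjoint A B := by
    refine fun A hA B hB => Finset.disjoint_left.mpr fun v hvA hvB => ?_
    obtain ⟨A', hA'D, hvA'⟩ := (hcover v).mpr ⟨B, hB, hvB⟩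
    rw [Finset.mem_sdiff] at hA
    exact hA.2 (hc.eq_of_mem hA.1 (hD hA'D) hvA hvA' ▸ hA'D)
  obtain ⟨hne, hdisj, hcov, hanti⟩ := hc
  refine ⟨fun A hA => ?_, fun A hA B hB hAB => ?_, fun v => ?_, fun A hA => ?_⟩
  · rcases Finset.mem_union.mp hA with hA | hA
    exacts [hne A (Finset.mem_sdiff.mp hA).1, (hN A hA).1]
  · rcases Finset.mem_union.mp hA with hA | hA <;> rcases Finset.mem_union.mp hB with hB | hB
    · exact hdisj A (Finset.mem_sdiff.mp hA).1 B (Finset.mem_sdiff.mp hB).1 hAB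
    · exact hold_new A hA B hB
    · exact (hold_new B hB A hA).symm
    · exact hNdisj A hA B hB hAB
  · obtain ⟨A, hA, hvA⟩ := hcov v
    by_cases hAD : A ∈ D
    · obtain ⟨B, hB, hvB⟩ := (hcover v).mp ⟨A, hAD, hvA⟩
      exact ⟨B, Finset.mem_union_right _ hB, hvB⟩
    · exact ⟨A, Finset.mem_union_left _ (Finset.mem_sdiff.mpr ⟨hA, hAD⟩), hvA⟩
  · rcases Finset.mem_union.mp hA with hA | hA
    exacts [hanti A (Finset.mem_sdiff.mp hA).1, (hN A hA).2]

end Colorings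

lemma exists_subset_mapsTo_injOn {α : Type*} [DecidableEq α] {f : α → α} {S : Finset α}
    (hS : S.Nonempty) (hf : Set.MapsTo f S S) :
    ∃ S' ⊆ S, S'.Nonempty ∧ Set.MapsTo f S' S' ∧ Set.InjOn f S' := by
  induction S using Finset.strongInduction with
  | H S ih =>
  by_cases hinj : Set.InjOn f S
  · exact ⟨S, subset_rfl, hS, hf, hinj⟩
  have himage : S.image f ⊂ S := Finset.ssubset_iff_subset_ne.mpr
    ⟨hf.finsetImage_subset, fun h => hinj (Finset.card_image_iff.mp (congrArg Finset.card h))⟩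
  obtain ⟨S', hS', h⟩ := ih _ himage (hS.image f)
    fun y hy => Finset.mem_image_of_mem f (himage.subset hy)
  exact ⟨S', hS'.trans himage.subset, h⟩

section Rotation

variable {V : Type*} [DecidableEq V]

def rotateClass (x : Finset V → V) (f : Finset V → Finset V) (A : Finset V) : Finset V :=
  insert (x (f A)) (A.erase (x A))

lemma mem_rotateClass {x : Finset V → V} {f : Finset V → Finset V} {A : Finset V} {v : V} :
    v ∈ rotateClass x f A ↔ v = x (f A) ∨ v ≠ x A ∧ v ∈ A := by
  simp [rotateClass]

end Rotation

def IsUniqueMinColoring {V : Type*} (G : SimpleGraph V) (c : Finset (Finset V)) : Prop :=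
  IsColoring G c ∧ ∀ d, IsColoring G d → d.card ≤ c.card → d = c

namespace IsUniqueMinColoring

variable {V : Type*} [DecidableEq V] {G : SimpleGraph V} {c : Finset (Finset V)}

lemma subset_of_replace (hc : IsUniqueMinColoring G c) {D N : Finset (Finset V)} (hD : D ⊆ c)
    (hN : ∀ B ∈ N, B.Nonempty ∧ IsAnticlique G B)
    (hNdisj : ∀ B ∈ N, ∀ B' ∈ N, B ≠ B' → Disjoint B B')
    (hcover : ∀ v, (∃ A ∈ D, v ∈ A) ↔ ∃ B ∈ N, v ∈ B) (hcard : N.card ≤ D.card) : N ⊆ c := by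
  have hcard' : (c \ D ∪ N).card ≤ c.card := by
    have := Finset.card_union_le (c \ D) N
    have := Finset.card_sdiff_of_subset hD
    have := Finset.card_le_card hD
    omega
  rw [← hc.2 _ (hc.1.sdiff_union hD hN hNdisj hcover) hcard']
  exact Finset.subset_union_right

/-- Moving `v` into `A` would give another coloring with at most as many classes. -/
lemma exists_adj (hc : IsUniqueMinColoring G c) {A B : Finset V} (hA : A ∈ c) (hB : B ∈ c)
    (hAB : A ≠ B) {v : V} (hv : v ∈ B) : ∃ a ∈ A, G.Adj v a := by
  by_contra! hnadj
  have hvA : v ∉ A := fun h => hAB (hc.1.eq_of_mem hA hB h hv)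
  -- `B.erase v` is empty when `B = {v}`
  have hN : ({insert v A, B.erase v} : Finset (Finset V)).erase ∅ ⊆ c := by
    refine hc.subset_of_replace (D := {A, B}) (by simp [Finset.insert_subset_iff, hA, hB])
      (fun X hX => ?_) (fun X hX Y hY hXY => ?_) (fun u => ?_) ?_
    · simp only [Finset.mem_erase, Finset.mem_insert, Finset.mem_singleton] at hX
      refine ⟨Finset.nonempty_iff_ne_empty.mpr hX.1, ?_⟩
      rcases hX.2 with rfl | rfl
      exacts [(hc.1.2.2.2 A hA).insert hnadj, (hc.1.2.2.2 B hB).mono (Finset.erase_subset _ _)]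
    · simp only [Finset.mem_erase, Finset.mem_insert, Finset.mem_singleton] at hX hY
      have hdisj : Disjoint (insert v A) (B.erase v) := by
        rw [Finset.disjoint_insert_left]
        exact ⟨by simp, (hc.1.2.1 A hA B hB hAB).mono_right (Finset.erase_subset _ _)⟩
      rcases hX.2 with rfl | rfl <;> rcases hY.2 with rfl | rfl
      exacts [absurd rfl hXY, hdisj, hdisj.symm, absurd rfl hXY]
    · constructor
      · rintro ⟨X, hX, huX⟩
        simp only [Finset.mem_insert, Finset.mem_singleton] at hX
        rcases hX with rfl | rfl
        · exact ⟨insert v X, by simp, Finset.mem_insert_of_mem huX⟩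
        · by_cases huv : u = v
          · exact ⟨insert v A, by simp, by simp [huv]⟩
          · exact ⟨X.erase v, by simp [Finset.ne_empty_of_mem (Finset.mem_erase.mpr ⟨huv, huX⟩)],
              Finset.mem_erase.mpr ⟨huv, huX⟩⟩
      · rintro ⟨X, hX, huX⟩
        simp only [Finset.mem_erase, Finset.mem_insert, Finset.mem_singleton] at hX
        rcases hX.2 with rfl | rfl
        · rcases Finset.mem_insert.mp huX with rfl | huA
          exacts [⟨B, by simp, hv⟩, ⟨A, by simp, huA⟩]
        · exact ⟨B, by simp, Finset.mem_of_mem_erase huX⟩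
    · calc _ ≤ ({insert v A, B.erase v} : Finset (Finset V)).card := Finset.card_erase_le
        _ ≤ 2 := Finset.card_le_two
        _ = _ := (Finset.card_pair hAB).symm
  have hvA' : insert v A ∈ c := hN (by simp [Finset.ne_empty_of_mem (Finset.mem_insert_self v A)])
  obtain ⟨a, ha⟩ := hc.1.1 A hA
  exact hvA (hc.1.eq_of_mem hvA' hA (Finset.mem_insert_of_mem ha) ha ▸ Finset.mem_insert_self v A)

lemma image_rotateClass_subset (hc : IsUniqueMinColoring G c)
    {S : Finset (Finset V)} (hSc : S ⊆ c) {f : Finset V → Finset V} (hf : Set.MapsTo f S S)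
    (hinj : Set.InjOn f S) {x : Finset V → V} (hx : ∀ A ∈ S, x A ∈ A)
    (hnadj : ∀ A ∈ S, ∀ a ∈ A, a ≠ x A → ¬ G.Adj a (x (f A))) :
    S.image (rotateClass x f) ⊆ c := by
  have hxf : ∀ A ∈ S, x (f A) ∈ f A := fun A hA => hx _ (hf hA)
  have hxf_mem : ∀ A ∈ S, ∀ B ∈ S, x (f A) ∈ B → x (f A) = x B := fun A hA B hB h => by
    rw [hc.1.eq_of_mem (hSc (hf hA)) (hSc hB) (hxf A hA) h]
  refine hc.subset_of_replace hSc (fun X hX => ?_) (fun X hX Y hY hXY => ?_) (fun v => ?_)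
    Finset.card_image_le
  · obtain ⟨A, hA, rfl⟩ := Finset.mem_image.mp hX
    refine ⟨Finset.insert_nonempty _ _,
      ((hc.1.2.2.2 A (hSc hA)).mono (Finset.erase_subset _ _)).insert fun a ha => ?_⟩
    rw [Finset.mem_erase] at ha
    exact fun h => hnadj A hA a ha.2 ha.1 h.symm
  · obtain ⟨A, hA, rfl⟩ := Finset.mem_image.mp hX
    obtain ⟨B, hB, rfl⟩ := Finset.mem_image.mp hY
    have hAB : A ≠ B := fun h => hXY (h ▸ rfl)
    refine Finset.disjoint_left.mpr fun v hvA hvB => ?_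
    rcases mem_rotateClass.mp hvA with rfl | ⟨hvx, hvA⟩ <;>
      rcases mem_rotateClass.mp hvB with hv | ⟨hvx', hvB⟩
    · exact hAB (hinj hA hB (hc.1.eq_of_mem (hSc (hf hA)) (hSc (hf hB)) (hxf A hA)
        (hv ▸ hxf B hB)))
    · exact hvx' (hxf_mem A hA B hB hvB)
    · exact hvx (hv ▸ hxf_mem B hB A hA (hv ▸ hvA))
    · exact hAB (hc.1.eq_of_mem (hSc hA) (hSc hB) hvA hvB)
  · constructor
    · rintro ⟨A, hA, hvA⟩
      by_cases hvx : v = x A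
      · obtain ⟨B, hB, rfl⟩ := Finset.surjOn_of_injOn_of_card_le f hf hinj le_rfl hA
        exact ⟨_, Finset.mem_image_of_mem _ hB, mem_rotateClass.mpr (Or.inl hvx)⟩
      · exact ⟨_, Finset.mem_image_of_mem _ hA, mem_rotateClass.mpr (Or.inr ⟨hvx, hvA⟩)⟩
    · rintro ⟨X, hX, hvX⟩
      obtain ⟨A, hA, rfl⟩ := Finset.mem_image.mp hX
      rcases mem_rotateClass.mp hvX with hv | ⟨-, hvA⟩
      exacts [⟨f A, hf hA, hv ▸ hxf A hA⟩, ⟨A, hA, hvA⟩]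

lemma eq_singleton_of_rotation (hc : IsUniqueMinColoring G c)
    {S : Finset (Finset V)} (hSc : S ⊆ c) {f : Finset V → Finset V} (hf : Set.MapsTo f S S)
    (hinj : Set.InjOn f S) (hfne : ∀ A ∈ S, f A ≠ A) {x : Finset V → V} (hx : ∀ A ∈ S, x A ∈ A)
    (hnadj : ∀ A ∈ S, ∀ a ∈ A, a ≠ x A → ¬ G.Adj a (x (f A))) : ∀ A ∈ S, A = {x A} := by
  intro A hA
  rw [Finset.eq_singleton_iff_unique_mem]
  refine ⟨hx A hA, fun a ha => by_contra fun hax => hfne A hA ?_⟩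
  have hrA : rotateClass x f A ∈ c :=
    hc.image_rotateClass_subset hSc hf hinj hx hnadj (Finset.mem_image_of_mem _ hA)
  exact (hc.1.eq_of_mem (hSc (hf hA)) hrA (hx _ (hf hA)) (mem_rotateClass.mpr (Or.inl rfl))).trans
    (hc.1.eq_of_mem hrA (hSc hA) (mem_rotateClass.mpr (Or.inr ⟨hax, ha⟩)) ha)

lemma exists_forall_adj_of_pairs (hc : IsUniqueMinColoring G c) {S : Finset (Finset V)}
    (hSc : S ⊆ c) (hS : S.Nonempty) {x y : Finset V → V}
    (hxy : ∀ A ∈ S, A = {x A, y A} ∧ x A ≠ y A) :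
    ∃ A ∈ S, ∀ B ∈ S, B ≠ A → G.Adj (y A) (x B) := by
  have hmem : ∀ A ∈ S, ∀ v, v ∈ A ↔ v = x A ∨ v = y A := fun A hA v => by
    simpa using Finset.ext_iff.mp (hxy A hA).1 v
  by_contra! h
  choose! f hfS hfne hfadj using h
  obtain ⟨S', hS'S, ⟨A, hA⟩, hmaps, hinj⟩ := exists_subset_mapsTo_injOn hS fun A hA => hfS A hA
  have hA1 : A = {x A} := by
    refine hc.eq_singleton_of_rotation (hS'S.trans hSc) hmaps hinj (fun A hA => hfne A (hS'S hA))
      (fun A hA => (hmem A (hS'S hA) _).mpr (Or.inl rfl)) (fun A hA a ha hax => ?_) A hA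
    exact ((hmem A (hS'S hA) a).mp ha).resolve_left hax ▸ hfadj A (hS'S hA)
  exact (hxy A (hS'S hA)).2 (Finset.eq_singleton_iff_unique_mem.mp hA1 |>.2 (y A)
    ((hmem A (hS'S hA) _).mpr (Or.inr rfl))).symm

lemma adj_of_singleton (hc : IsUniqueMinColoring G c) {A B : Finset V} {a : V} (hA : A ∈ c)
    (hAeq : A = {a}) (hB : B ∈ c) (hAB : A ≠ B) {v : V} (hv : v ∈ B) : G.Adj a v := by
  obtain ⟨a', ha', h⟩ := hc.exists_adj hA hB hAB hv
  rw [hAeq, Finset.mem_singleton] at ha'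
  exact ha' ▸ h.symm

lemma adj_of_not_adj (hc : IsUniqueMinColoring G c) {A B : Finset V} {b b' : V} (hA : A ∈ c)
    (hB : B ∈ c) (hBeq : B = {b, b'}) (hAB : A ≠ B) {a : V} (ha : a ∈ A) (h : ¬ G.Adj a b) :
    G.Adj a b' := by
  obtain ⟨u, hu, hau⟩ := hc.exists_adj hB hA hAB.symm ha
  rw [hBeq, Finset.mem_insert, Finset.mem_singleton] at hu
  rcases hu with rfl | rfl
  exacts [absurd hau h, hau]

/-- Exchanging `a` and `b` between the two classes would give another coloring. -/
lemma adj_of_not_adj_of_pairs (hc : IsUniqueMinColoring G c) {A B : Finset V} {a a' b b' : V}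
    (hA : A ∈ c) (hAeq : A = {a, a'}) (hB : B ∈ c) (hBeq : B = {b, b'}) (hAB : A ≠ B)
    (ha : a ≠ a') (h : ¬ G.Adj a b) : G.Adj a' b' := by
  by_contra h'
  set x : Finset V → V := fun C => if C = A then a' else b
  have hxA : x A = a' := if_pos rfl
  have hxB : x B = b := if_neg hAB.symm
  have hA1 : A = {x A} := by
    refine hc.eq_singleton_of_rotation (S := {A, B}) (f := Equiv.swap A B)
      (by simp [Finset.insert_subset_iff, hA, hB]) (fun C hC => ?_) (Equiv.injective _).injOn
      (fun C hC => ?_) (fun C hC => ?_) (fun C hC u hu hux => ?_) A (by simp)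
    all_goals simp only [Finset.coe_insert, Finset.coe_singleton, Set.mem_insert_iff,
      Set.mem_singleton_iff, Finset.mem_insert, Finset.mem_singleton] at hC
    all_goals rcases hC with rfl | rfl
    · simp
    · simp
    · simp [hAB.symm]
    · simp [hAB]
    · rw [hxA, hAeq]; simp
    · rw [hxB, hBeq]; simp
    · rw [Equiv.swap_apply_left, hxB]
      rw [hxA] at hux
      simp only [hAeq, Finset.mem_insert, Finset.mem_singleton] at hu
      rwa [hu.resolve_right hux]
    · rw [Equiv.swap_apply_right, hxA]
      rw [hxB] at hux
      simp only [hBeq, Finset.mem_insert, Finset.mem_singleton] at hu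
      rw [hu.resolve_left hux]
      exact fun h'' => h' h''.symm
  exact ha (Finset.eq_singleton_iff_unique_mem.mp hA1 |>.2 a (by simp [hAeq]) |>.trans hxA)

end IsUniqueMinColoring

/-- `φ A = some B` records that `A` is matched to `B`. -/
def IsGreedyMatching {α : Type*} (N P : α → α → Prop) (R : Finset α) (φ : α → Option α) : Prop :=
  (∀ A B, φ A = some B → B ∈ R ∧ A ≠ B ∧ N A B ∧ φ B = some A) ∧
  ∀ A ∈ R, ∀ B ∈ R, A ≠ B → N A B →
    (∃ A', φ A = some A' ∧ (A' = B ∨ P A' B)) ∨ ∃ B', φ B = some B' ∧ (B' = A ∨ P B' A)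

lemma IsGreedyMatching.extend {α : Type*} [DecidableEq α] {N P : α → α → Prop}
    (hN : ∀ A B, N A B → N B A) {R : Finset α} {σ g : α} {φ : α → Option α}
    (hφ : IsGreedyMatching N P ((R.erase σ).erase g) φ) (hσR : σ ∈ R) (hgR : g ∈ R)
    (hgσ : g ≠ σ) (hσg : N σ g) (hσ : ∀ B ∈ R, B ≠ σ → (∃ C ∈ R, C ≠ B ∧ N B C) → P σ B)
    (hg : ∀ B ∈ R, B ≠ g → B ≠ σ → N σ B → P g B) :
    IsGreedyMatching N P R fun A => if A = σ then some g else if A = g then some σ else φ A := by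
  set ψ : α → Option α := fun A => if A = σ then some g else if A = g then some σ else φ A
  have hψσ : ψ σ = some g := if_pos rfl
  have hψg : ψ g = some σ := by simp [ψ, hgσ]
  have hψ : ∀ A, A ≠ σ → A ≠ g → ψ A = φ A := fun A hAσ hAg => by simp [ψ, hAσ, hAg]
  refine ⟨fun A B h => ?_, fun A hA B hB hAB hNAB => ?_⟩
  · by_cases hAσ : A = σ
    · rw [hAσ, hψσ, Option.some_inj] at h
      rw [← h, hAσ]
      exact ⟨hgR, hgσ.symm, hσg, hψg⟩
    by_cases hAg : A = g
    · rw [hAg, hψg, Option.some_inj] at h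
      rw [← h, hAg]
      exact ⟨hσR, hgσ, hN _ _ hσg, hψσ⟩
    rw [hψ A hAσ hAg] at h
    obtain ⟨hB, hAB, hNAB, hBA⟩ := hφ.1 A B h
    simp only [Finset.mem_erase] at hB
    exact ⟨hB.2.2, hAB, hNAB, (hψ B hB.2.1 hB.1).trans hBA⟩
  · have key : ∀ A ∈ R, ∀ B ∈ R, A ≠ B → N A B → A = σ ∨ A = g →
        ∃ A', ψ A = some A' ∧ (A' = B ∨ P A' B) := by
      rintro A hA B hB hAB hNAB (rfl | rfl)
      · exact ⟨g, hψσ, or_iff_not_imp_left.mpr fun hgB => hg B hB (Ne.symm hgB) hAB.symm hNAB⟩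
      · refine ⟨σ, hψg, or_iff_not_imp_left.mpr fun hσB => hσ B hB (Ne.symm hσB) ?_⟩
        exact ⟨A, hA, hAB, hN _ _ hNAB⟩
    by_cases hA' : A = σ ∨ A = g
    · exact Or.inl (key A hA B hB hAB hNAB hA')
    by_cases hB' : B = σ ∨ B = g
    · exact Or.inr (key B hB A hA hAB.symm (hN _ _ hNAB) hB')
    simp only [not_or] at hA' hB'
    rw [hψ A hA'.1 hA'.2, hψ B hB'.1 hB'.2]
    exact hφ.2 A (by simp [hA, hA'.1, hA'.2]) B (by simp [hB, hB'.1, hB'.2]) hAB hNAB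

lemma exists_isGreedyMatching {α : Type*} [DecidableEq α] {N P : α → α → Prop}
    (hN : ∀ A B, N A B → N B A) (R : Finset α)
    (hsink : ∀ S ⊆ R, S.Nonempty → ∃ A ∈ S, ∀ B ∈ S, B ≠ A → P A B) :
    ∃ φ, IsGreedyMatching N P R φ := by
  classical
  induction R using Finset.strongInduction with
  | H R ih =>
  set E := R.filter fun A => ∃ B ∈ R, B ≠ A ∧ N A B
  rcases E.eq_empty_or_nonempty with hE | hE
  · refine ⟨fun _ => none, by simp, fun A hA B hB hAB hNAB => ?_⟩
    have hAE : A ∈ E := Finset.mem_filter.mpr ⟨hA, B, hB, hAB.symm, hNAB⟩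
    simp [hE] at hAE
  obtain ⟨σ, hσE, hσ⟩ := hsink E (Finset.filter_subset _ _) hE
  obtain ⟨hσR, B₀, hB₀R, hB₀σ, hσB₀⟩ := Finset.mem_filter.mp hσE
  set F := R.filter fun B => B ≠ σ ∧ N σ B
  obtain ⟨g, hgF, hg⟩ := hsink F (Finset.filter_subset _ _)
    ⟨B₀, Finset.mem_filter.mpr ⟨hB₀R, hB₀σ, hσB₀⟩⟩
  obtain ⟨hgR, hgσ, hσg⟩ := Finset.mem_filter.mp hgF
  have hR' : (R.erase σ).erase g ⊂ R :=
    (Finset.erase_subset _ _).trans_ssubset (Finset.erase_ssubset hσR)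
  obtain ⟨φ, hφ⟩ := ih _ hR' fun S hS => hsink S (hS.trans hR'.subset)
  exact ⟨_, hφ.extend hN hσR hgR hgσ hσg
    (fun B hB hBσ hBE => hσ B (Finset.mem_filter.mpr ⟨hB, hBE⟩) hBσ)
    (fun B hB hBg hBσ hσB => hg B (Finset.mem_filter.mpr ⟨hB, hBσ, hσB⟩) hBg)⟩

section BranchSets

variable {V : Type*} [DecidableEq V] {G : SimpleGraph V} {c : Finset (Finset V)}

lemma isShallowCliqueMinor_image {S : Finset V → Finset V}
    (hS : ∀ A ∈ c, (S A).Nonempty ∧ ConnSet G (S A) ∧ (S A).card ≤ 2)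
    (hST : ∀ A ∈ c, ∀ B ∈ c, A ≠ B → Disjoint (S A) (S B) ∧ SetsAdj G (S A) (S B)) :
    IsShallowCliqueMinor G (c.image S) ∧ (c.image S).card = c.card := by
  refine ⟨⟨⟨?_, ?_, ?_⟩, ?_⟩, Finset.card_image_of_injOn fun A hA B hB hAB => ?_⟩
  · simpa using fun A hA => (hS A hA).1
  · simpa using fun A hA => (hS A hA).2.1
  · simp only [Finset.mem_image]
    rintro _ ⟨A, hA, rfl⟩ _ ⟨B, hB, rfl⟩ hAB
    exact hST A hA B hB fun h => hAB (h ▸ rfl)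
  · simpa using fun A hA => (hS A hA).2.2
  · by_contra hne
    obtain ⟨v, hv⟩ := (hS A hA).1
    exact Finset.disjoint_left.mp (hST A hA B hB hne).1 hv (hAB ▸ hv)

def branchSet (tv tb : Finset V → V) (φ : Finset V → Option (Finset V)) (A : Finset V) :
    Finset V :=
  insert (tv A) ((φ A).toFinset.image tb)

variable {tv tb : Finset V → V} {φ : Finset V → Option (Finset V)}

lemma mem_branchSet {A : Finset V} {v : V} :
    v ∈ branchSet tv tb φ A ↔ v = tv A ∨ ∃ B, φ A = some B ∧ tb B = v := by
  simp [branchSet]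

lemma card_branchSet_le (A : Finset V) : (branchSet tv tb φ A).card ≤ 2 :=
  (Finset.card_insert_le _ _).trans <| Nat.succ_le_succ <| Finset.card_image_le.trans <| by
    cases φ A <;> simp

lemma IsUniqueMinColoring.connSet_branchSet (hc : IsUniqueMinColoring G c)
    (hrep : ∀ A ∈ c, A = {tv A, tb A})
    (hφ : IsGreedyMatching (fun A B => ¬ G.Adj (tv A) (tv B)) (fun A B => G.Adj (tb A) (tv B))
      (c.filter fun A => tv A ≠ tb A) φ)
    {A : Finset V} (hA : A ∈ c) : ConnSet G (branchSet tv tb φ A) := by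
  refine connSet_insert_of_forall_adj fun v hv => ?_
  simp only [Finset.mem_image, Option.mem_toFinset, Option.mem_def] at hv
  obtain ⟨B, hAB, rfl⟩ := hv
  obtain ⟨hBR, hne, hnadj, -⟩ := hφ.1 A B hAB
  have hB := (Finset.mem_filter.mp hBR).1
  exact hc.adj_of_not_adj hA hB (hrep B hB) hne (mem_of_eq_pair (hrep A hA)).1 hnadj

lemma IsColoring.disjoint_branchSet (hc : IsColoring G c) (hrep : ∀ A ∈ c, A = {tv A, tb A})
    (hφ : IsGreedyMatching (fun A B => ¬ G.Adj (tv A) (tv B)) (fun A B => G.Adj (tb A) (tv B))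
      (c.filter fun A => tv A ≠ tb A) φ)
    {A B : Finset V} (hA : A ∈ c) (hB : B ∈ c) (hAB : A ≠ B) :
    Disjoint (branchSet tv tb φ A) (branchSet tv tb φ B) := by
  have root_ne : ∀ C ∈ c, ∀ D D', φ D = some D' → tv C ≠ tb D' := by
    intro C hC D D' hDD' heq
    obtain ⟨hD', hne⟩ := Finset.mem_filter.mp (hφ.1 D D' hDD').1
    obtain rfl := hc.eq_of_mem hC hD' (mem_of_eq_pair (hrep C hC)).1
      (heq ▸ (mem_of_eq_pair (hrep D' hD')).2)
    exact hne heq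
  refine Finset.disjoint_left.mpr fun v hvA hvB => ?_
  rcases mem_branchSet.mp hvA with rfl | ⟨A', hAA', rfl⟩ <;>
    rcases mem_branchSet.mp hvB with h | ⟨B', hBB', h⟩
  · exact hAB (hc.eq_of_mem hA hB (mem_of_eq_pair (hrep A hA)).1
      (h ▸ (mem_of_eq_pair (hrep B hB)).1))
  · exact root_ne A hA B B' hBB' h.symm
  · exact root_ne B hB A A' hAA' h.symm
  · obtain ⟨hA'R, -, -, hA'A⟩ := hφ.1 A A' hAA'
    obtain ⟨hB'R, -, -, hB'B⟩ := hφ.1 B B' hBB'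
    have hA' := (Finset.mem_filter.mp hA'R).1
    have hB' := (Finset.mem_filter.mp hB'R).1
    obtain rfl := hc.eq_of_mem hA' hB' (mem_of_eq_pair (hrep A' hA')).2
      (h ▸ (mem_of_eq_pair (hrep B' hB')).2)
    exact hAB (Option.some_inj.mp (hA'A.symm.trans hB'B))

lemma IsUniqueMinColoring.setsAdj_branchSet (hc : IsUniqueMinColoring G c)
    (hrep : ∀ A ∈ c, A = {tv A, tb A})
    (hφ : IsGreedyMatching (fun A B => ¬ G.Adj (tv A) (tv B)) (fun A B => G.Adj (tb A) (tv B))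
      (c.filter fun A => tv A ≠ tb A) φ)
    {A B : Finset V} (hA : A ∈ c) (hB : B ∈ c) (hAB : A ≠ B) :
    SetsAdj G (branchSet tv tb φ A) (branchSet tv tb φ B) := by
  have root_mem : ∀ C, tv C ∈ branchSet tv tb φ C := fun C => mem_branchSet.mpr (Or.inl rfl)
  have partner_mem : ∀ C C', φ C = some C' → tb C' ∈ branchSet tv tb φ C :=
    fun C C' h => mem_branchSet.mpr (Or.inr ⟨C', h, rfl⟩)
  by_cases hadj : G.Adj (tv A) (tv B)
  · exact ⟨tv A, root_mem A, tv B, root_mem B, hadj⟩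
  have hpair : ∀ C ∈ c, ∀ D ∈ c, C ≠ D → ¬ G.Adj (tv C) (tv D) → tv C ≠ tb C :=
    fun C hC D hD hCD hnadj heq => hnadj <| hc.adj_of_singleton hC
      ((hrep C hC).trans (by rw [← heq, Finset.pair_eq_singleton])) hD hCD
      (mem_of_eq_pair (hrep D hD)).1
  have key : ∀ C ∈ c, ∀ D ∈ c, C ≠ D → ¬ G.Adj (tv C) (tv D) →
      (∃ C', φ C = some C' ∧ (C' = D ∨ G.Adj (tb C') (tv D))) →
      SetsAdj G (branchSet tv tb φ C) (branchSet tv tb φ D) := by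
    rintro C hC D hD hCD hnadj ⟨C', hCC', rfl | hadj'⟩
    · have hadj' := hc.adj_of_not_adj_of_pairs hC (hrep C hC) hD (hrep C' hD) hCD
        (hpair C hC C' hD hCD hnadj) hnadj
      exact ⟨tb C', partner_mem C C' hCC', tb C, partner_mem C' C (hφ.1 C C' hCC').2.2.2,
        hadj'.symm⟩
    · exact ⟨tb C', partner_mem C C' hCC', tv D, root_mem D, hadj'⟩
  have hnadj' : ¬ G.Adj (tv B) (tv A) := fun h => hadj h.symm
  rcases hφ.2 A (Finset.mem_filter.mpr ⟨hA, hpair A hA B hB hAB hadj⟩)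
    B (Finset.mem_filter.mpr ⟨hB, hpair B hB A hA hAB.symm hnadj'⟩) hAB hadj
    with h | h
  · exact key A hA B hB hAB hadj h
  · exact (key B hB A hA hAB.symm hnadj' h).symm

lemma inter_branchSet {T : Finset V} (hroots : ∀ A ∈ c, T ∩ A = {tv A} ∧ A = {tv A, tb A})
    (hφ : IsGreedyMatching (fun A B => ¬ G.Adj (tv A) (tv B)) (fun A B => G.Adj (tb A) (tv B))
      (c.filter fun A => tv A ≠ tb A) φ)
    {A : Finset V} (hA : A ∈ c) : T ∩ branchSet tv tb φ A = {tv A} := by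
  have hT : ∀ C ∈ c, ∀ v ∈ C, v ∈ T ↔ v = tv C := fun C hC v hv => by
    simpa [hv] using Finset.ext_iff.mp (hroots C hC).1 v
  ext v
  simp only [Finset.mem_inter, mem_branchSet, Finset.mem_singleton]
  constructor
  · rintro ⟨hvT, hv | ⟨B, hAB, rfl⟩⟩
    · exact hv
    · obtain ⟨hB, hne⟩ := Finset.mem_filter.mp (hφ.1 A B hAB).1
      exact absurd ((hT B hB _ (mem_of_eq_pair (hroots B hB).2).2).mp hvT).symm hne
  · rintro rfl
    exact ⟨(hT A hA _ (mem_of_eq_pair (hroots A hA).2).1).mpr rfl, Or.inl rfl⟩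

lemma IsUniqueMinColoring.exists_traversed_shallowCliqueMinor (hc : IsUniqueMinColoring G c)
    {T : Finset V} (hroots : ∀ A ∈ c, T ∩ A = {tv A} ∧ A = {tv A, tb A}) :
    ∃ K, IsShallowCliqueMinor G K ∧ K.card = c.card ∧ Traversed T K := by
  set R := c.filter fun A => tv A ≠ tb A
  obtain ⟨φ, hφ⟩ := exists_isGreedyMatching (N := fun A B => ¬ G.Adj (tv A) (tv B))
    (P := fun A B => G.Adj (tb A) (tv B)) (fun A B h h' => h h'.symm) R
    fun S hS hne => hc.exists_forall_adj_of_pairs (hS.trans (Finset.filter_subset _ _)) hne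
      fun A hA => ⟨(hroots A (Finset.mem_filter.mp (hS hA)).1).2, (Finset.mem_filter.mp (hS hA)).2⟩
  have hrep : ∀ A ∈ c, A = {tv A, tb A} := fun A hA => (hroots A hA).2
  obtain ⟨hK, hKcard⟩ := isShallowCliqueMinor_image (c := c) (S := branchSet tv tb φ)
    (fun A hA => ⟨Finset.insert_nonempty _ _, hc.connSet_branchSet hrep hφ hA,
      card_branchSet_le A⟩)
    (fun A hA B hB hAB => ⟨hc.1.disjoint_branchSet hrep hφ hA hB hAB,
      hc.setsAdj_branchSet hrep hφ hA hB hAB⟩)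
  refine ⟨_, hK, hKcard, fun X hX => ?_⟩
  obtain ⟨A, hA, rfl⟩ := Finset.mem_image.mp hX
  rw [inter_branchSet hroots hφ hA, Finset.card_singleton]

end BranchSets

theorem unique_coloring_rooted_shallow_clique_minor_general {V : Type*} [DecidableEq V]
    (G : SimpleGraph V) (hat : HasNoAntitriangle G) (c : Finset (Finset V))
    (hmin : MinColoring G c)
    (huniq : ∀ d, IsColoring G d → d.card = c.card → d = c)
    (T : Finset V) (hT : Traversed T c) :
    ∃ K : Finset (Finset V), IsShallowCliqueMinor G K ∧ K.card = c.card ∧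
      Traversed T K := by
  have hc : IsUniqueMinColoring G c :=
    ⟨hmin.1, fun d hd hle => huniq d hd (le_antisymm hle (hmin.2 d hd))⟩
  rcases c.eq_empty_or_nonempty with rfl | ⟨A, hA⟩
  · exact ⟨∅, by simp [IsShallowCliqueMinor, IsCliqueMinor, Traversed]⟩
  obtain ⟨v, -⟩ := hmin.1.1 A hA
  have : Nonempty V := ⟨v⟩
  obtain ⟨tv, tb, hroots⟩ := hmin.1.exists_roots hat hT
  exact hc.exists_traversed_shallowCliqueMinor hroots

/-- rooted version: any transversal of the unique minimum coloring
traverses some shallow clique minor of size `χ(G)`. -/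
theorem unique_coloring_rooted_shallow_clique_minor {V : Type*} [Fintype V] [DecidableEq V]
    (G : SimpleGraph V) (hat : HasNoAntitriangle G) (c : Finset (Finset V))
    (hmin : MinColoring G c)
    (huniq : ∀ d, IsColoring G d → d.card = c.card → d = c)
    (T : Finset V) (hT : Traversed T c) :
    ∃ K : Finset (Finset V), IsShallowCliqueMinor G K ∧ K.card = c.card ∧
      Traversed T K :=
  unique_coloring_rooted_shallow_clique_minor_general G hat c hmin huniq T hT
end

section
/- Suppose G has a Kempe-coloring 𝔠 and T ⊆ V(G) is a separator of G (i.e., G − T is disconnected). Then T contains a vertex of all but at most one class of 𝔠. -/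
open SimpleGraph

section Aux
variable {V : Type*}

lemma reach_mono (G : SimpleGraph V) {s t : Set V} (h : s ⊆ t)
    {x y : s} (hr : (G.induce s).Reachable x y) :
    (G.induce t).Reachable ⟨x, h x.2⟩ ⟨y, h y.2⟩ :=
  hr.map (G.induceHomOfLE h).toHom

end Aux

/-- a separator of a graph with a Kempe-coloring contains a vertex
of all but at most one color class. -/
theorem separator_meets_all_but_one_class {V : Type*} [Fintype V] [DecidableEq V]
    (G : SimpleGraph V) (c : Finset (Finset V)) (hk : IsKempe G c)
    (T : Finset V)
    (hsep : ∃ a b : {v : V // v ∉ T},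
      ¬ (G.induce {v : V | v ∉ T}).Reachable ⟨a, a.2⟩ ⟨b, b.2⟩) :
    ∃ A₀ : Finset V, ∀ B ∈ c, B ≠ A₀ → ∃ v ∈ B, v ∈ T := by
  by_contra hcon
  push_neg at hcon
  obtain ⟨⟨hne, hdisj, hcover, hanti⟩, hconn⟩ := hk
  -- get two distinct classes avoiding T
  obtain ⟨A, hAc, -, hAT⟩ := hcon ∅
  obtain ⟨B, hBc, hBA, hBT⟩ := hcon A
  obtain ⟨a₀, ha₀⟩ := hne A hAc
  have ha₀T : a₀ ∉ T := hAT a₀ ha₀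
  have hABsub : (↑(A ∪ B) : Set V) ⊆ {v : V | v ∉ T} := by
    intro v hv
    simp only [Finset.coe_union, Set.mem_union, Finset.mem_coe] at hv
    rcases hv with h | h
    · exact hAT v h
    · exact hBT v h
  -- key claim: every vertex outside T is reachable (in G - T) to a₀
  have key : ∀ (x : V) (hx : x ∉ T),
      (G.induce {v : V | v ∉ T}).Reachable ⟨x, hx⟩ ⟨a₀, ha₀T⟩ := by
    intro x hx
    obtain ⟨C, hCc, hxC⟩ := hcover x
    by_cases hxAB : x ∈ A ∪ B
    · have hr : (G.induce (↑(A ∪ B) : Set V)).Reachable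
          ⟨x, by exact_mod_cast hxAB⟩ ⟨a₀, by simp [ha₀]⟩ :=
        (hconn A hAc B hBc (Ne.symm hBA)).preconnected _ _
      exact reach_mono G hABsub hr
    · -- x's class C ≠ A; use connectivity of A ∪ C to find neighbor of x in A
      have hCA : C ≠ A := by
        rintro rfl
        exact hxAB (Finset.mem_union_left _ hxC)
      have hconAC := hconn A hAc C hCc (Ne.symm hCA)
      have hxAC : x ∈ A ∪ C := Finset.mem_union_right _ hxC
      have hxA : x ∉ A := fun h => hxAB (Finset.mem_union_left _ h)
      -- find a neighbor of x inside A ∪ C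
      have hr : (G.induce (↑(A ∪ C) : Set V)).Reachable
          ⟨x, by exact_mod_cast hxAC⟩ ⟨a₀, by simp [ha₀]⟩ := hconAC.preconnected _ _
      obtain ⟨w⟩ := hr
      have hne' : (⟨x, by exact_mod_cast hxAC⟩ : (↑(A ∪ C) : Set V)) ≠
          ⟨a₀, by simp [ha₀]⟩ := by
        intro h
        have hxa : x = a₀ := congrArg Subtype.val h
        exact hxA (hxa ▸ ha₀)
      have hadj := w.adj_snd (SimpleGraph.Walk.not_nil_of_ne hne')
      set y := w.getVert 1 with hy
      have hadjG : G.Adj x (y : V) := hadj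
      have hyAC : (y : V) ∈ A ∪ C := by exact_mod_cast y.2
      have hyA : (y : V) ∈ A := by
        rcases Finset.mem_union.1 hyAC with h | h
        · exact h
        · exact absurd hadjG (hanti C hCc x hxC y h)
      have hyT : (y : V) ∉ T := hAT _ hyA
      have hstep : (G.induce {v : V | v ∉ T}).Adj ⟨x, hx⟩ ⟨(y : V), hyT⟩ := hadjG
      refine hstep.reachable.trans ?_
      have hr2 : (G.induce (↑(A ∪ B) : Set V)).Reachable
          ⟨(y : V), by simp [hyA]⟩ ⟨a₀, by simp [ha₀]⟩ :=
        (hconn A hAc B hBc (Ne.symm hBA)).preconnected _ _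
      exact reach_mono G hABsub hr2
  obtain ⟨a, b, hab⟩ := hsep
  exact hab ((key a a.2).trans (key b b.2).symm)
end

section
/- If G has a Kempe-coloring of size k, then G has at least (k−1)·|V(G)| − C(k,2) edges, with equality if and only if any two distinct color classes induce a tree. -/
open SimpleGraph

/-!
Every edge of `G` joins two distinct colour classes, so `|E(G)|` is the sum, over unordered
pairs `{A, B}` of classes, of the number of edges between `A` and `B`, which is the number of
edges of the connected graph `G[A ∪ B]`. A connected graph on `|A| + |B|` vertices has at least
`|A| + |B| - 1` edges, with equality exactly for trees; summing `|A| + |B| - 1` over the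
`C(k, 2)` pairs gives `(k - 1)|V| - C(k, 2)`.
-/

open Finset

namespace Finset

variable {ι : Type*} [DecidableEq ι]

lemma sum_offDiag_add_eq_two_mul (s : Finset ι) (f : ι → ℕ) :
    ∑ p ∈ s.offDiag, (f p.1 + f p.2) = 2 * ((#s - 1) * ∑ i ∈ s, f i) := by
  have hsplit := sum_union (disjoint_diag_offDiag s) (f := fun p => f p.1 + f p.2)
  have hprod : ∑ p ∈ s ×ˢ s, (f p.1 + f p.2) = 2 * (#s * ∑ i ∈ s, f i) := by
    simp only [sum_product, sum_add_distrib, sum_const, smul_eq_mul, ← mul_sum]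
    ring
  rw [diag_union_offDiag, hprod, sum_diag, sum_add_distrib] at hsplit
  dsimp only at hsplit
  rw [Nat.sub_mul, one_mul]
  omega

lemma card_offDiag_eq_two_mul_choose_two (s : Finset ι) :
    #s.offDiag = 2 * (#s).choose 2 := by
  rw [← Sym2.card_image_offDiag, Sym2.two_mul_card_image_offDiag]

end Finset

namespace SimpleGraph

variable {V : Type*} {G : SimpleGraph V} [DecidableRel G.Adj]

lemma two_mul_card_edgeFinset_induce (s : Finset V) :
    2 * #(G.induce (s : Set V)).edgeFinset = #(G.interedges s s) := by
  rw [two_mul_card_edgeFinset]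
  refine card_bij' (fun p _ => ((p.1 : V), (p.2 : V)))
    (fun p hp =>
      (⟨p.1, (G.mem_interedges_iff.1 hp).1⟩, ⟨p.2, (G.mem_interedges_iff.1 hp).2.1⟩))
    ?_ ?_ ?_ ?_ <;> simp [mem_interedges_iff]

lemma interedges_eq_empty_of_isAnticlique {A : Finset V} (hA : IsAnticlique G A) :
    G.interedges A A = ∅ :=
  eq_empty_of_forall_notMem fun _ hp =>
    let ⟨hx, hy, hxy⟩ := G.mem_interedges_iff.1 hp
    hA _ hx _ hy hxy

variable [DecidableEq V] {A B : Finset V}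

lemma card_interedges_union_self (hAB : Disjoint A B) (hA : IsAnticlique G A)
    (hB : IsAnticlique G B) :
    #(G.interedges (A ∪ B) (A ∪ B)) = 2 * #(G.interedges A B) := by
  have hsplit : G.interedges (A ∪ B) (A ∪ B) = G.interedges A B ∪ G.interedges B A := by
    ext ⟨x, y⟩
    have := hA x
    have := hB x
    simp only [mem_union, mk_mem_interedges_iff]
    tauto
  have hdisj : Disjoint (G.interedges A B) (G.interedges B A) :=
    Finset.disjoint_left.2 fun _ h h' =>
      Finset.disjoint_left.1 hAB (G.mem_interedges_iff.1 h).1 (G.mem_interedges_iff.1 h').1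
  have hswap : #(G.interedges B A) = #(G.interedges A B) :=
    have := G.symm
    Rel.card_interedges_comm (r := G.Adj) B A
  rw [hsplit, card_union_of_disjoint hdisj, hswap, two_mul]

lemma card_edgeSet_induce_union (hAB : Disjoint A B) (hA : IsAnticlique G A)
    (hB : IsAnticlique G B) :
    Nat.card (G.induce (↑(A ∪ B) : Set V)).edgeSet = #(G.interedges A B) := by
  have := two_mul_card_edgeFinset_induce (G := G) (A ∪ B)
  rw [card_interedges_union_self hAB hA hB, edgeFinset_card] at this
  rw [Nat.card_eq_fintype_card]
  omega

variable (hAB : Disjoint A B) (hA : IsAnticlique G A) (hB : IsAnticlique G B)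
  (hconn : ConnSet G (A ∪ B))
include hAB hA hB hconn

lemma card_add_card_le_card_interedges_add_one : #A + #B ≤ #(G.interedges A B) + 1 := by
  have := hconn.card_vert_le_card_edgeSet_add_one
  rwa [card_edgeSet_induce_union hAB hA hB, Nat.card_coe_set_eq, Set.ncard_coe_finset,
    card_union_of_disjoint hAB] at this

lemma isTree_induce_union_iff :
    (G.induce (↑(A ∪ B) : Set V)).IsTree ↔ #A + #B = #(G.interedges A B) + 1 := by
  rw [isTree_iff_connected_and_card, card_edgeSet_induce_union hAB hA hB,
    Nat.card_coe_set_eq, Set.ncard_coe_finset, card_union_of_disjoint hAB]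
  exact ⟨fun h => h.2.symm, fun h => ⟨hconn, h.symm⟩⟩

end SimpleGraph

namespace IsColoring

variable {V : Type*} [Fintype V] [DecidableEq V] {G : SimpleGraph V} {c : Finset (Finset V)}

def toFinpartition (h : IsColoring G c) : Finpartition (univ : Finset V) where
  parts := c
  supIndep := supIndep_iff_pairwiseDisjoint.2 h.2.1
  sup_parts := eq_univ_of_forall fun v =>
    let ⟨A, hA, hv⟩ := h.2.2.1 v
    mem_sup.2 ⟨A, hA, hv⟩
  bot_notMem hbot := (h.1 ∅ hbot).ne_empty rfl

lemma sum_card (h : IsColoring G c) : ∑ A ∈ c, #A = Fintype.card V :=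
  h.toFinpartition.sum_card_parts

lemma sum_card_interedges_offDiag [DecidableRel G.Adj] (h : IsColoring G c) :
    ∑ p ∈ c.offDiag, #(G.interedges p.1 p.2) = 2 * #G.edgeFinset := calc
  _ = ∑ p ∈ c ×ˢ c, #(G.interedges p.1 p.2) := by
    refine sum_subset (fun p hp => ?_) fun ⟨A, B⟩ hp hoff => ?_
    · obtain ⟨h₁, h₂, -⟩ := mem_offDiag.1 hp
      exact mem_product.2 ⟨h₁, h₂⟩
    · obtain ⟨hA, hB⟩ := mem_product.1 hp
      obtain rfl : A = B := by simpa [mem_offDiag, hA, hB] using hoff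
      rw [interedges_eq_empty_of_isAnticlique (h.2.2.2 A hA), card_empty]
  _ = #(G.interedges univ univ) :=
    (Rel.card_interedges_finpartition (r := G.Adj) h.toFinpartition h.toFinpartition).symm
  _ = 2 * #G.edgeFinset := by
    rw [two_mul_card_edgeFinset, interedges_def, univ_product_univ]

end IsColoring

namespace IsKempe

variable {V : Type*} [DecidableEq V] {G : SimpleGraph V} [DecidableRel G.Adj]
  {c : Finset (Finset V)} {A B : Finset V}

lemma card_add_card_le_card_interedges_add_one (h : IsKempe G c) (hA : A ∈ c) (hB : B ∈ c)
    (hAB : A ≠ B) : #A + #B ≤ #(G.interedges A B) + 1 :=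
  SimpleGraph.card_add_card_le_card_interedges_add_one (h.1.2.1 A hA B hB hAB) (h.1.2.2.2 A hA)
    (h.1.2.2.2 B hB) (h.2 A hA B hB hAB)

lemma isTree_induce_union_iff (h : IsKempe G c) (hA : A ∈ c) (hB : B ∈ c) (hAB : A ≠ B) :
    (G.induce (↑(A ∪ B) : Set V)).IsTree ↔ #A + #B = #(G.interedges A B) + 1 :=
  SimpleGraph.isTree_induce_union_iff (h.1.2.1 A hA B hB hAB) (h.1.2.2.2 A hA)
    (h.1.2.2.2 B hB) (h.2 A hA B hB hAB)

end IsKempe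

/-- a graph with a Kempe-coloring of size `k` has at least
`(k−1)·|V| − C(k,2)` edges, with equality iff any two classes induce a tree. -/
theorem kempe_edge_bound {V : Type*} [Fintype V] [DecidableEq V]
    (G : SimpleGraph V) [DecidableRel G.Adj] (c : Finset (Finset V)) (k : ℕ)
    (hk : IsKempe G c) (hcard : c.card = k) :
    (k - 1) * Fintype.card V ≤ G.edgeFinset.card + k.choose 2 ∧
    ((k - 1) * Fintype.card V = G.edgeFinset.card + k.choose 2 ↔
      ∀ A ∈ c, ∀ B ∈ c, A ≠ B → (G.induce (↑(A ∪ B) : Set V)).IsTree) := by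
  set f : Finset V × Finset V → ℕ := fun p => #p.1 + #p.2
  set g : Finset V × Finset V → ℕ := fun p => #(G.interedges p.1 p.2) + 1
  have hle : ∀ p ∈ c.offDiag, f p ≤ g p := fun ⟨A, B⟩ hp =>
    let ⟨hA, hB, hAB⟩ := mem_offDiag.1 hp
    hk.card_add_card_le_card_interedges_add_one hA hB hAB
  have hf : ∑ p ∈ c.offDiag, f p = 2 * ((k - 1) * Fintype.card V) := by
    rw [sum_offDiag_add_eq_two_mul, hk.1.sum_card, hcard]
  have hg : ∑ p ∈ c.offDiag, g p = 2 * (#G.edgeFinset + k.choose 2) := by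
    rw [sum_add_distrib, hk.1.sum_card_interedges_offDiag, sum_const, smul_eq_mul, mul_one,
      card_offDiag_eq_two_mul_choose_two, hcard, mul_add]
  refine ⟨by have := sum_le_sum hle; omega, ?_⟩
  calc (k - 1) * Fintype.card V = #G.edgeFinset + k.choose 2
      ↔ ∑ p ∈ c.offDiag, f p = ∑ p ∈ c.offDiag, g p := by rw [hf, hg]; omega
    _ ↔ ∀ p ∈ c.offDiag, f p = g p := sum_eq_sum_iff_of_le hle
    _ ↔ _ := by
      refine ⟨fun h A hA B hB hAB => ?_, fun h ⟨A, B⟩ hp => ?_⟩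
      · exact (hk.isTree_induce_union_iff hA hB hAB).2 (h (A, B) (mem_offDiag.2 ⟨hA, hB, hAB⟩))
      · obtain ⟨hA, hB, hAB⟩ := mem_offDiag.1 hp
        exact (hk.isTree_induce_union_iff hA hB hAB).1 (h A hA B hB hAB)
end

section
/- For k ≥ 3, the graph G on vertex set {1,2,3} × {1,…,k}, where (i,j) and (i',j') are adjacent iff i ≠ i', j ≠ j', and (i = 2 or i' = 2 or (i > i' and j < j')), satisfies: for each j, D_j = {(1,j),(2,j),(3,j)} is an independent set, and for any j < j', the set D_j ∪ D_{j'} induces a path on six vertices; consequently {D_1,…,D_k} is a Kempe-coloring of G of size k. -/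
open SimpleGraph

/-- The example graph on `{1,2,3} × {1,…,k}` (here indexed by `Fin 3 × Fin k`,
with the middle row being `1` instead of `2`): `(i,j)` and `(i',j')` are adjacent
iff `i ≠ i'`, `j ≠ j'` and (`i = 2` or `i' = 2` or (`i > i'` and `j < j'`)). -/
def exGraph (k : ℕ) : SimpleGraph (Fin 3 × Fin k) :=
  SimpleGraph.fromRel (fun p q =>
    p.1 ≠ q.1 ∧ p.2 ≠ q.2 ∧ (p.1 = 1 ∨ q.1 = 1 ∨ (q.1 < p.1 ∧ p.2 < q.2)))

lemma exGraph_adj_lt {k : ℕ} {j j' : Fin k} (h : j < j') (i i' : Fin 3) :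
    (exGraph k).Adj (i, j) (i', j') ↔ i ≠ i' ∧ (i = 1 ∨ i' = 1 ∨ i' < i) := by
  rw [exGraph, SimpleGraph.fromRel_adj]
  simp only [ne_eq, Prod.mk.injEq, not_and]
  constructor
  · rintro ⟨-, ⟨hne, -, hc⟩ | ⟨hne, -, hc⟩⟩
    · exact ⟨hne, hc.imp id (Or.imp id And.left)⟩
    · refine ⟨fun hh => hne hh.symm, ?_⟩
      rcases hc with h1 | h1 | h1
      · exact Or.inr (Or.inl h1)
      · exact Or.inl h1
      · exact absurd h1.2 (asymm h)
  · rintro ⟨hne, hc⟩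
    refine ⟨fun _ => h.ne, Or.inl ⟨hne, h.ne, ?_⟩⟩
    exact hc.imp id (Or.imp id (fun hl => ⟨hl, h⟩))

lemma exGraph_not_adj_col {k : ℕ} {j : Fin k} (i i' : Fin 3) :
    ¬ (exGraph k).Adj (i, j) (i', j) := by
  rw [exGraph, SimpleGraph.fromRel_adj]
  rintro ⟨-, ⟨-, hj, -⟩ | ⟨-, hj, -⟩⟩ <;> exact hj rfl

lemma exGraph_adj_lt' {k : ℕ} {j j' : Fin k} (h : j < j') (i i' : Fin 3) :
    (exGraph k).Adj (i, j') (i', j) ↔ i' ≠ i ∧ (i' = 1 ∨ i = 1 ∨ i < i') := by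
  rw [SimpleGraph.adj_comm]; exact exGraph_adj_lt h i' i

/-- the path ordering of the six vertices of two columns -/
def pv {k : ℕ} (j j' : Fin k) : Fin 6 → Fin 3 × Fin k
  | 0 => (2, j') | 1 => (1, j) | 2 => (0, j') | 3 => (2, j) | 4 => (1, j') | 5 => (0, j)

lemma pathIso {k : ℕ} {j j' : Fin k} (h : j < j') :
    Nonempty ((exGraph k).induce
      (↑((Finset.univ : Finset (Fin 3)).image (fun i => (i, j)) ∪
         (Finset.univ : Finset (Fin 3)).image (fun i => (i, j'))) : Set (Fin 3 × Fin k)) ≃g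
      SimpleGraph.pathGraph 6) := by
  set S : Set (Fin 3 × Fin k) :=
    (↑((Finset.univ : Finset (Fin 3)).image (fun i => (i, j)) ∪
       (Finset.univ : Finset (Fin 3)).image (fun i => (i, j'))) : Set (Fin 3 × Fin k)) with hS
  have hmemS : ∀ p : Fin 3 × Fin k, p ∈ S ↔ p.2 = j ∨ p.2 = j' := by
    intro p
    simp only [hS, Finset.coe_union, Set.mem_union, Finset.coe_image, Set.mem_image,
      Finset.coe_univ, Set.image_univ, Set.mem_range]
    constructor
    · rintro (⟨i, hi⟩ | ⟨i, hi⟩) <;> [left; right] <;> rw [← hi]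
    · rintro (hp | hp) <;> [left; right] <;> exact ⟨p.1, by rw [← hp]⟩
  have hmem : ∀ a : Fin 6, pv j j' a ∈ S := by
    intro a; rw [hmemS]; fin_cases a <;> simp [pv]
  have hne : j ≠ j' := h.ne
  let f : Fin 6 → S := fun a => ⟨pv j j' a, hmem a⟩
  have hbij : Function.Bijective f := by
    constructor
    · intro a b hab
      have : pv j j' a = pv j j' b := Subtype.ext_iff.1 hab
      fin_cases a <;> fin_cases b <;> simp_all [pv, Prod.ext_iff]
    · rintro ⟨⟨i, l⟩, hl⟩
      rw [hmemS] at hl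
      fin_cases i <;> rcases hl with rfl | rfl
      · exact ⟨5, rfl⟩
      · exact ⟨2, rfl⟩
      · exact ⟨1, rfl⟩
      · exact ⟨4, rfl⟩
      · exact ⟨3, rfl⟩
      · exact ⟨0, rfl⟩
  refine ⟨(SimpleGraph.Iso.symm ⟨Equiv.ofBijective f hbij, ?_⟩)⟩
  intro a b
  show (exGraph k).Adj (pv j j' a) (pv j j' b) ↔ (pathGraph 6).Adj a b
  have h' : ¬ j' < j := asymm h
  fin_cases a <;> fin_cases b <;>
    simp only [pv, pathGraph_adj, exGraph_adj_lt h, exGraph_adj_lt' h,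
      exGraph_not_adj_col, ne_eq] <;> decide


/-- the columns `D_j` are independent, any two induce a path on six
vertices, and hence they form a Kempe-coloring of size `k`. -/
theorem exGraph_kempe (k : ℕ) (hk : 3 ≤ k)
    (D : Fin k → Finset (Fin 3 × Fin k))
    (hD : ∀ j, D j = (Finset.univ : Finset (Fin 3)).image (fun i => (i, j))) :
    (∀ j, IsAnticlique (exGraph k) (D j)) ∧
    (∀ j j' : Fin k, j < j' →
      Nonempty ((exGraph k).induce (↑(D j ∪ D j') : Set (Fin 3 × Fin k)) ≃g
        SimpleGraph.pathGraph 6)) ∧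
    IsKempe (exGraph k) (Finset.univ.image D) ∧
    (Finset.univ.image D).card = k := by
  have hmemD : ∀ (j : Fin k) (p : Fin 3 × Fin k), p ∈ D j ↔ p.2 = j := by
    intro j p
    rw [hD]
    simp only [Finset.mem_image, Finset.mem_univ, true_and]
    constructor
    · rintro ⟨i, hi⟩; rw [← hi]
    · rintro hp; exact ⟨p.1, by rw [← hp]⟩
  have hDinj : Function.Injective D := by
    intro j j' hjj
    have : ((0 : Fin 3), j) ∈ D j' := by rw [← hjj, hmemD]
    rw [hmemD] at this; exact this
  have hanti : ∀ j, IsAnticlique (exGraph k) (D j) := by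
    intro j x hx y hy
    rw [hmemD] at hx hy
    obtain ⟨x1, x2⟩ := x; obtain ⟨y1, y2⟩ := y
    cases hx; cases hy
    exact exGraph_not_adj_col x1 y1
  have hpath : ∀ j j' : Fin k, j < j' →
      Nonempty ((exGraph k).induce (↑(D j ∪ D j') : Set (Fin 3 × Fin k)) ≃g
        SimpleGraph.pathGraph 6) := by
    intro j j' hjj
    rw [hD j, hD j']
    exact pathIso hjj
  have hconn : ∀ j j' : Fin k, j ≠ j' → ConnSet (exGraph k) (D j ∪ D j') := by
    intro j j' hjj
    rcases hjj.lt_or_gt with hlt | hlt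
    · obtain ⟨e⟩ := hpath j j' hlt
      exact e.symm.connected_iff.mp (pathGraph_connected 5)
    · obtain ⟨e⟩ := hpath j' j hlt
      rw [ConnSet, Finset.union_comm]
      exact e.symm.connected_iff.mp (pathGraph_connected 5)
  refine ⟨hanti, hpath, ⟨⟨?_, ?_, ?_, ?_⟩, ?_⟩, ?_⟩
  · rintro A hA
    obtain ⟨j, -, rfl⟩ := Finset.mem_image.1 hA
    exact ⟨(0, j), (hmemD j _).2 rfl⟩
  · rintro A hA B hB hAB
    obtain ⟨j, -, rfl⟩ := Finset.mem_image.1 hA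
    obtain ⟨j', -, rfl⟩ := Finset.mem_image.1 hB
    refine Finset.disjoint_left.2 fun p hp hp' => ?_
    rw [hmemD] at hp hp'
    exact hAB (congrArg D (hp.symm.trans hp'))
  · intro v
    exact ⟨D v.2, Finset.mem_image_of_mem D (Finset.mem_univ _), (hmemD _ _).2 rfl⟩
  · rintro A hA
    obtain ⟨j, -, rfl⟩ := Finset.mem_image.1 hA
    exact hanti j
  · rintro A hA B hB hAB
    obtain ⟨j, -, rfl⟩ := Finset.mem_image.1 hA
    obtain ⟨j', -, rfl⟩ := Finset.mem_image.1 hB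
    exact hconn j j' (fun hh => hAB (by rw [hh]))
  · rw [Finset.card_image_of_injective _ hDinj, Finset.card_univ, Fintype.card_fin]
end

section
/- Let D be a k-connected tournament on 2k+1 vertices, and let G be the bipartite graph with vertices x⁺, x⁻ for each vertex x of D, where x⁺ is adjacent to y⁻ iff x = y or D has a directed edge from x to y. Then G is (k+1)-connected, and in the complement of G, for each x, the pair {x⁺, x⁻} is an independent set, and the union of any two distinct such pairs induces a connected graph (a path of length 3); hence {{x⁺,x⁻} : x ∈ V(D)} is a Kempe-coloring of the complement of G of size 2k+1. -/
/-!
Let `S` be a set of at most `k` vertices of `G` and `F` the set of vertices of `D` with a copy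
in `S`. As `D - (F \ {a})` is strongly connected and misses a vertex, every `a ∈ F` has an
out-neighbour and an in-neighbour outside `F`. Hence every surviving `a⁺` reaches some `w⁺` with
`w ∉ F` through `w⁻`, every surviving `b⁻` is adjacent to such a `w⁺`, and two such `w⁺, w'⁺`
are joined through `w'⁻` or `w⁻`, according to the direction of the edge between `w` and `w'`.
In the complement of `G`, if `x → y` then the only edges on `{x⁺, x⁻, y⁺, y⁻}` are `x⁺y⁺`,
`y⁺x⁻` and `x⁻y⁻`.
-/

open SimpleGraph

/-- The bipartite graph obtained from a tournament `r` on `X`: vertices `x⁺ = inl x`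
and `x⁻ = inr x`, with `x⁺` adjacent to `y⁻` iff `x = y` or there is a directed
edge from `x` to `y`. -/
def tournamentGraph {X : Type*} (r : X → X → Prop) : SimpleGraph (X ⊕ X) :=
  SimpleGraph.fromRel (fun a b =>
    ∃ x y : X, a = Sum.inl x ∧ b = Sum.inr y ∧ (x = y ∨ r x y))

open Finset Relation

def IsKConnected {X : Type*} (r : X → X → Prop) (k : ℕ) : Prop :=
  ∀ S : Finset X, S.card < k → ∀ a b : X, a ∉ S → b ∉ S →
    ReflTransGen (fun u v => r u v ∧ u ∉ S ∧ v ∉ S) a b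

theorem exists_notMem_of_card_lt {X : Type*} [Fintype X] {F : Finset X}
    (hF : F.card < Fintype.card X) : ∃ x, x ∉ F :=
  not_forall.1 fun h => (card_lt_iff_ne_univ F).1 hF (eq_univ_iff_forall.2 h)

section IsKConnected

variable {X : Type*} {r : X → X → Prop} {k : ℕ}

theorem IsKConnected.flip (h : IsKConnected r k) : IsKConnected (flip r) k :=
  fun S hS a b ha hb =>
    ReflTransGen.mono (fun _ _ ⟨huv, hu, hv⟩ => ⟨huv, hv, hu⟩) _ _
      (reflTransGen_swap.2 (h S hS b a hb ha))

theorem IsKConnected.exists_notMem_eq_or_rel [Fintype X] [DecidableEq X]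
    (hconn : IsKConnected r k) (hirr : ∀ x, ¬ r x x)
    (hk : k < Fintype.card X) {F : Finset X} (hF : F.card ≤ k) (a : X) :
    ∃ w ∉ F, a = w ∨ r a w := by
  by_cases ha : a ∈ F
  swap
  · exact ⟨a, ha, Or.inl rfl⟩
  obtain ⟨b, hb⟩ := exists_notMem_of_card_lt (hF.trans_lt hk)
  have hS : (F.erase a).card < k := by
    rw [card_erase_of_mem ha]
    have := card_pos.2 ⟨a, ha⟩
    omega
  rcases (hconn _ hS a b (notMem_erase a F) fun h => hb (mem_of_mem_erase h)).cases_head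
    with rfl | ⟨z, ⟨haz, -, hz⟩, -⟩
  · exact absurd ha hb
  · refine ⟨z, fun hzF => hz (mem_erase.2 ⟨?_, hzF⟩), Or.inr haz⟩
    rintro rfl
    exact hirr _ haz

end IsKConnected

section TournamentGraph

variable {X : Type*} {r : X → X → Prop}

@[simp]
theorem tournamentGraph_adj_inl_inr {x y : X} :
    (tournamentGraph r).Adj (Sum.inl x) (Sum.inr y) ↔ x = y ∨ r x y := by
  simp [tournamentGraph]

@[simp]
theorem tournamentGraph_adj_inr_inl {x y : X} :
    (tournamentGraph r).Adj (Sum.inr y) (Sum.inl x) ↔ x = y ∨ r x y := by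
  simp [tournamentGraph]

@[simp]
theorem tournamentGraph_not_adj_inl_inl {x y : X} :
    ¬ (tournamentGraph r).Adj (Sum.inl x) (Sum.inl y) := by
  simp [tournamentGraph]

@[simp]
theorem tournamentGraph_not_adj_inr_inr {x y : X} :
    ¬ (tournamentGraph r).Adj (Sum.inr x) (Sum.inr y) := by
  simp [tournamentGraph]

theorem tournamentGraph_induce_connected [Fintype X] [DecidableEq X] {k : ℕ}
    (hconn : IsKConnected r k) (hirr : ∀ x, ¬ r x x)
    (htotal : ∀ x y, x ≠ y → r x y ∨ r y x) (hk : k < Fintype.card X)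
    {S : Finset (X ⊕ X)} (hS : S.card ≤ k) :
    ((tournamentGraph r).induce {v | v ∉ S}).Connected := by
  set H := (tournamentGraph r).induce {v | v ∉ S}
  set F := S.image (Sum.elim id id)
  have hF : F.card ≤ k := card_image_le.trans hS
  have hinl : ∀ w ∉ F, Sum.inl w ∉ S := fun w hw h => hw (mem_image_of_mem _ h)
  have hinr : ∀ w ∉ F, Sum.inr w ∉ S := fun w hw h => hw (mem_image_of_mem _ h)
  have edge : ∀ {u v : X ⊕ X} (hu : u ∉ S) (hv : v ∉ S), (tournamentGraph r).Adj u v →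
      H.Reachable ⟨u, hu⟩ ⟨v, hv⟩ := fun _ _ h => Adj.reachable h
  have hplus : ∀ w (hw : w ∉ F) w' (hw' : w' ∉ F),
      H.Reachable ⟨_, hinl w hw⟩ ⟨_, hinl w' hw'⟩ := by
    intro w hw w' hw'
    rcases eq_or_ne w w' with rfl | hne
    · rfl
    rcases htotal w w' hne with h | h
    · exact (edge _ (hinr w' hw') (by simp [h])).trans (edge _ _ (by simp))
    · exact (edge _ (hinr w hw) (by simp)).trans (edge _ _ (by simp [h]))
  obtain ⟨w₀, hw₀⟩ := exists_notMem_of_card_lt (hF.trans_lt hk)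
  refine H.connected_iff_exists_forall_reachable.2 ⟨⟨_, hinl w₀ hw₀⟩, ?_⟩
  rintro ⟨a | b, hu⟩
  · obtain ⟨w, hw, haw⟩ := hconn.exists_notMem_eq_or_rel hirr hk hF a
    exact (hplus w₀ hw₀ w hw).trans <|
      (edge _ (hinr w hw) (by simp)).trans (edge _ hu (by simpa using haw))
  · obtain ⟨w, hw, hbw⟩ := hconn.flip.exists_notMem_eq_or_rel hirr hk hF b
    exact (hplus w₀ hw₀ w hw).trans (edge _ hu (by simpa [flip, eq_comm] using hbw))

variable [DecidableEq X]

theorem isAnticlique_compl_tournamentGraph_pair (x : X) :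
    IsAnticlique (tournamentGraph r)ᶜ {Sum.inl x, Sum.inr x} := by
  simp [IsAnticlique]

theorem compl_tournamentGraph_induce_iso_pathGraph_of_rel {x y : X} (hxy : x ≠ y) (hr : r x y)
    (hyx : ¬ r y x) :
    Nonempty ((tournamentGraph r)ᶜ.induce
      (↑(({Sum.inl x, Sum.inr x} ∪ {Sum.inl y, Sum.inr y}) : Finset (X ⊕ X)) :
        Set (X ⊕ X)) ≃g pathGraph 4) := by
  set A : Finset (X ⊕ X) := ({Sum.inl x, Sum.inr x} ∪ {Sum.inl y, Sum.inr y})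
  let f : Fin 4 → (↑A : Set (X ⊕ X)) :=
    ![⟨Sum.inl x, by simp [A]⟩, ⟨Sum.inl y, by simp [A]⟩, ⟨Sum.inr x, by simp [A]⟩,
      ⟨Sum.inr y, by simp [A]⟩]
  have hf : Function.Bijective f := by
    constructor
    · intro i j h
      fin_cases i <;> fin_cases j <;> simp_all [f, hxy.symm]
    · rintro ⟨v, hv⟩
      simp only [A, coe_union, Set.mem_union, coe_insert, Set.mem_insert_iff, coe_singleton,
        Set.mem_singleton_iff] at hv
      rcases hv with (rfl | rfl) | (rfl | rfl)
      exacts [⟨0, rfl⟩, ⟨2, rfl⟩, ⟨1, rfl⟩, ⟨3, rfl⟩]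
  refine ⟨(Iso.symm ⟨Equiv.ofBijective f hf, ?_⟩ :)⟩
  intro i j
  fin_cases i <;> fin_cases j <;>
    simp [f, pathGraph_adj, hxy, hxy.symm, hr, hyx]

theorem compl_tournamentGraph_induce_iso_pathGraph
    (htour : ∀ x y : X, x ≠ y → (r x y ↔ ¬ r y x)) {x y : X} (hxy : x ≠ y) :
    Nonempty ((tournamentGraph r)ᶜ.induce
      (↑(({Sum.inl x, Sum.inr x} ∪ {Sum.inl y, Sum.inr y}) : Finset (X ⊕ X)) :
        Set (X ⊕ X)) ≃g pathGraph 4) := by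
  by_cases hr : r x y
  · exact compl_tournamentGraph_induce_iso_pathGraph_of_rel hxy hr ((htour x y hxy).1 hr)
  · rw [Finset.union_comm]
    exact compl_tournamentGraph_induce_iso_pathGraph_of_rel hxy.symm
      (by_contra fun h => hr ((htour x y hxy).2 h)) hr

theorem inl_inr_pair_injective :
    Function.Injective fun x : X => ({Sum.inl x, Sum.inr x} : Finset (X ⊕ X)) :=
  fun a b h => by simpa using (Finset.ext_iff.1 h (Sum.inl a)).1 (by simp)

theorem isKempe_compl_tournamentGraph [Fintype X]
    (htour : ∀ x y : X, x ≠ y → (r x y ↔ ¬ r y x)) :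
    IsKempe (tournamentGraph r)ᶜ
      (univ.image fun x : X => ({Sum.inl x, Sum.inr x} : Finset (X ⊕ X))) := by
  simp only [IsKempe, IsColoring, forall_mem_image, mem_univ, true_implies, ne_eq]
  refine ⟨⟨fun x => insert_nonempty _ _, fun x y hxy => ?_, fun v => ?_,
    isAnticlique_compl_tournamentGraph_pair⟩, fun x y hxy => ?_⟩
  · have hne : x ≠ y := fun h => hxy (by rw [h])
    simp [hne.symm]
  · rcases v with x | x <;> exact ⟨_, mem_image_of_mem _ (mem_univ x), by simp⟩
  · obtain ⟨e⟩ := compl_tournamentGraph_induce_iso_pathGraph htour fun h : x = y =>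
      hxy (by rw [h])
    exact e.connected_iff.2 (pathGraph_connected 3)

end TournamentGraph

/-- for a `k`-connected tournament on `2k+1` vertices, the associated
bipartite graph `G` is `(k+1)`-connected, each pair `{x⁺, x⁻}` is independent in the
complement of `G`, any two distinct such pairs induce in the complement a path on
four vertices (a path of length 3), and the pairs form a Kempe-coloring of the
complement of size `2k+1`. -/
theorem tournament_kempe {X : Type*} [Fintype X] [DecidableEq X]
    (k : ℕ) (r : X → X → Prop)
    (hcard : Fintype.card X = 2 * k + 1)
    (hirr : ∀ x, ¬ r x x)
    (htour : ∀ x y : X, x ≠ y → (r x y ↔ ¬ r y x))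
    (hconn : ∀ S : Finset X, S.card < k → ∀ a b : X, a ∉ S → b ∉ S →
      Relation.ReflTransGen (fun u v => r u v ∧ u ∉ S ∧ v ∉ S) a b) :
    (Fintype.card (X ⊕ X) > k + 1 ∧ ∀ S : Finset (X ⊕ X), S.card < k + 1 →
      ((tournamentGraph r).induce {v : X ⊕ X | v ∉ S}).Connected) ∧
    (∀ x : X, IsAnticlique (tournamentGraph r)ᶜ
      ({Sum.inl x, Sum.inr x} : Finset (X ⊕ X))) ∧
    (∀ x y : X, x ≠ y →
      Nonempty ((tournamentGraph r)ᶜ.induce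
        (↑(({Sum.inl x, Sum.inr x} ∪ {Sum.inl y, Sum.inr y}) : Finset (X ⊕ X)) :
          Set (X ⊕ X)) ≃g SimpleGraph.pathGraph 4)) ∧
    IsKempe (tournamentGraph r)ᶜ
      (Finset.univ.image (fun x : X => ({Sum.inl x, Sum.inr x} : Finset (X ⊕ X)))) ∧
    (Finset.univ.image
      (fun x : X => ({Sum.inl x, Sum.inr x} : Finset (X ⊕ X)))).card = 2 * k + 1 := by
  have hk : k < Fintype.card X := by omega
  have htotal : ∀ x y, x ≠ y → r x y ∨ r y x := fun x y hxy =>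
    or_iff_not_imp_left.2 fun h => by_contra fun h' => h ((htour x y hxy).2 h')
  refine ⟨⟨by rw [Fintype.card_sum]; omega, fun S hS => ?_⟩,
    isAnticlique_compl_tournamentGraph_pair,
    fun x y => compl_tournamentGraph_induce_iso_pathGraph htour,
    isKempe_compl_tournamentGraph htour, ?_⟩
  · exact tournamentGraph_induce_connected hconn hirr htotal hk (Nat.le_of_lt_succ hS)
  · rw [card_image_of_injective _ inl_inr_pair_injective, card_univ, hcard]
end
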